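/- arXiv:math/0309294 — 6 statements merged into one kernel-verified Lean document; each statement's English description precedes it below -/
import Mathlib

section
/- Let A be a C*-algebra, X a Hilbert A-module, I a closed ideal of A, and X_I = X/XI the quotient Hilbert A/I-module. For every η ∈ X_I there exists ξ ∈ X such that [ξ] = η and ‖ξ‖_X = ‖η‖_{X_I}; in particular the norm on X_I coincides with the quotient norm. -/
noncomputable section

/-- A (right) Hilbert C*-module over a C*-algebra `A`. -/
class HilbertModule (A : Type*) [CStarAlgebra A] (X : Type*)
    [NormedAddCommGroup X] [NormedSpace ℂ X] : Type _ where
  rsmul : X → A → X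
  inner : X → X → A
  rsmul_add_left : ∀ (x y : X) (a : A), rsmul (x + y) a = rsmul x a + rsmul y a
  rsmul_add_right : ∀ (x : X) (a b : A), rsmul x (a + b) = rsmul x a + rsmul x b
  rsmul_rsmul : ∀ (x : X) (a b : A), rsmul (rsmul x a) b = rsmul x (a * b)
  rsmul_csmul_left : ∀ (c : ℂ) (x : X) (a : A), rsmul (c • x) a = c • rsmul x a
  rsmul_csmul_right : ∀ (c : ℂ) (x : X) (a : A), rsmul x (c • a) = c • rsmul x a
  inner_add_left : ∀ (x y z : X), inner (x + y) z = inner x z + inner y z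
  inner_add_right : ∀ (x y z : X), inner x (y + z) = inner x y + inner x z
  inner_csmul_right : ∀ (c : ℂ) (x y : X), inner x (c • y) = c • inner x y
  star_inner : ∀ (x y : X), star (inner x y) = inner y x
  inner_rsmul_right : ∀ (x y : X) (a : A), inner x (rsmul y a) = inner x y * a
  inner_self_isPositive : ∀ x : X, ∃ b : A, inner x x = star b * b
  norm_sq_inner : ∀ x : X, ‖x‖ ^ 2 = ‖inner x x‖
  norm_inner_le : ∀ x y : X, ‖inner x y‖ ≤ ‖x‖ * ‖y‖
  norm_rsmul_le : ∀ (x : X) (a : A), ‖rsmul x a‖ ≤ ‖x‖ * ‖a‖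

namespace HilbertModule

variable {A : Type*} [CStarAlgebra A] {X : Type*}
  [NormedAddCommGroup X] [NormedSpace ℂ X] [HilbertModule A X]

/-- The closed submodule `X·S` generated by products `ξ·a`, `a ∈ S`. -/
def idealSub (X : Type*) {A : Type*} [CStarAlgebra A] [NormedAddCommGroup X]
    [NormedSpace ℂ X] [HilbertModule A X] (S : Set A) : Set X :=
  closure (Submodule.span ℂ {x : X | ∃ (ξ : X) (a : A), a ∈ S ∧ x = rsmul ξ a} : Set X)

/-- The rank-one ("theta") operator `ζ ↦ ξ⟨η,ζ⟩`. -/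
def rankOne (A : Type*) {X : Type*} [CStarAlgebra A] [NormedAddCommGroup X]
    [NormedSpace ℂ X] [HilbertModule A X] (ξ η : X) : X →L[ℂ] X :=
  LinearMap.mkContinuous
    { toFun := fun ζ => rsmul ξ (inner (A := A) η ζ)
      map_add' := fun x y => by
        show rsmul ξ (inner (A := A) η (x + y)) = _
        rw [inner_add_right, rsmul_add_right]
      map_smul' := fun c x => by
        show rsmul ξ (inner (A := A) η (c • x)) = _
        simp only [RingHom.id_apply]
        rw [inner_csmul_right, rsmul_csmul_right] }
    (‖ξ‖ * ‖η‖)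
    (fun ζ => by
      calc ‖rsmul ξ (inner (A := A) η ζ)‖ ≤ ‖ξ‖ * ‖inner (A := A) η ζ‖ :=
            norm_rsmul_le _ _
        _ ≤ ‖ξ‖ * (‖η‖ * ‖ζ‖) :=
            mul_le_mul_of_nonneg_left (norm_inner_le _ _) (norm_nonneg _)
        _ = ‖ξ‖ * ‖η‖ * ‖ζ‖ := (mul_assoc _ _ _).symm)

/-- The set of "compact" operators `K(X)`: the closed linear span of rank-one operators. -/
def compacts (A X : Type*) [CStarAlgebra A] [NormedAddCommGroup X]
    [NormedSpace ℂ X] [HilbertModule A X] : Set (X →L[ℂ] X) :=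
  closure (Submodule.span ℂ {T : X →L[ℂ] X | ∃ ξ η : X, T = rankOne A ξ η} : Set (X →L[ℂ] X))

/-- `K(X·I)`, viewed inside the operators on `X`: the closed span of rank-one operators
with both legs in the subset `S`. -/
def compactsOn (A : Type*) {X : Type*} [CStarAlgebra A] [NormedAddCommGroup X]
    [NormedSpace ℂ X] [HilbertModule A X] (S : Set X) : Set (X →L[ℂ] X) :=
  closure (Submodule.span ℂ
    {T : X →L[ℂ] X | ∃ ξ ∈ S, ∃ η ∈ S, T = rankOne A ξ η} : Set (X →L[ℂ] X))

/-- An operator is adjointable if it has an adjoint with respect to the `A`-valued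
inner product. -/
def IsAdjointable (A : Type*) {X : Type*} [CStarAlgebra A] [NormedAddCommGroup X]
    [NormedSpace ℂ X] [HilbertModule A X] (S : X →L[ℂ] X) : Prop :=
  ∃ T : X →L[ℂ] X, ∀ x y : X, inner (A := A) (S x) y = inner (A := A) x (T y)

end HilbertModule

/-- A C*-correspondence over `A`: a Hilbert `A`-module with a left action of `A`
by adjointable operators. -/
class Correspondence (A : Type*) [CStarAlgebra A] (X : Type*)
    [NormedAddCommGroup X] [NormedSpace ℂ X] extends HilbertModule A X where
  lsmul : A → X → X
  lsmul_add_left : ∀ (a b : A) (x : X), lsmul (a + b) x = lsmul a x + lsmul b x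
  lsmul_add_right : ∀ (a : A) (x y : X), lsmul a (x + y) = lsmul a x + lsmul a y
  lsmul_mul : ∀ (a b : A) (x : X), lsmul (a * b) x = lsmul a (lsmul b x)
  lsmul_csmul_left : ∀ (c : ℂ) (a : A) (x : X), lsmul (c • a) x = c • lsmul a x
  lsmul_csmul_right : ∀ (c : ℂ) (a : A) (x : X), lsmul a (c • x) = c • lsmul a x
  inner_lsmul_left : ∀ (a : A) (x y : X), inner (lsmul a x) y = inner x (lsmul (star a) y)
  lsmul_rsmul : ∀ (a : A) (x : X) (b : A), lsmul a (rsmul x b) = rsmul (lsmul a x) b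
  norm_lsmul_le : ∀ (a : A) (x : X), ‖lsmul a x‖ ≤ ‖a‖ * ‖x‖

namespace Correspondence

open HilbertModule

variable {A : Type*} [CStarAlgebra A] {X : Type*}
  [NormedAddCommGroup X] [NormedSpace ℂ X] [Correspondence A X]

/-- The left action `φ_X(a)` as a continuous linear operator on `X`. -/
def lact (A : Type*) {X : Type*} [CStarAlgebra A] [NormedAddCommGroup X]
    [NormedSpace ℂ X] [Correspondence A X] (a : A) : X →L[ℂ] X :=
  LinearMap.mkContinuous
    { toFun := lsmul a
      map_add' := lsmul_add_right a
      map_smul' := fun c x => by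
        show lsmul a (c • x) = _
        simp only [RingHom.id_apply]; rw [lsmul_csmul_right] }
    ‖a‖ (norm_lsmul_le a)

/-- The ideal `X(S)`: closed span of `{⟨η, φ_X(a)ξ⟩ : a ∈ S}`. -/
def corrApply (X : Type*) {A : Type*} [CStarAlgebra A] [NormedAddCommGroup X]
    [NormedSpace ℂ X] [Correspondence A X] (S : Set A) : Set A :=
  closure (Submodule.span ℂ
    {b : A | ∃ a ∈ S, ∃ ξ η : X, b = inner (A := A) η (lsmul a ξ)} : Set A)

/-- The ideal `X⁻¹(S) = {a : ⟨η, φ_X(a)ξ⟩ ∈ S for all ξ, η}`. -/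
def corrInv (X : Type*) {A : Type*} [CStarAlgebra A] [NormedAddCommGroup X]
    [NormedSpace ℂ X] [Correspondence A X] (S : Set A) : Set A :=
  {a : A | ∀ ξ η : X, inner (A := A) η (lsmul a ξ) ∈ S}

/-- The kernel of the left action `φ_X`. -/
def kerLact (X : Type*) {A : Type*} [CStarAlgebra A] [NormedAddCommGroup X]
    [NormedSpace ℂ X] [Correspondence A X] : Set A :=
  {a : A | ∀ ξ : X, lsmul a ξ = 0}

/-- Katsura's ideal `J_X = φ_X⁻¹(K(X)) ∩ (ker φ_X)^⊥`. -/
def JX (X : Type*) {A : Type*} [CStarAlgebra A] [NormedAddCommGroup X]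
    [NormedSpace ℂ X] [Correspondence A X] : Set A :=
  {a : A | lact A (X := X) a ∈ compacts A X ∧ ∀ b ∈ kerLact X, a * b = 0}

end Correspondence

open HilbertModule Correspondence

/-- Data presenting a Hilbert `B`-module `Y` as the quotient `X_I = X/XI` of a Hilbert
`A`-module `X` by a closed two-sided ideal `I` of `A` (with `B` playing the role of `A/I`). -/
structure QuotientData (A B : Type*) [CStarAlgebra A] [CStarAlgebra B]
    (I : TwoSidedIdeal A)
    (X Y : Type*) [NormedAddCommGroup X] [NormedSpace ℂ X] [HilbertModule A X]
    [NormedAddCommGroup Y] [NormedSpace ℂ Y] [HilbertModule B Y] : Type _ where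
  π : A →⋆ₐ[ℂ] B
  π_surjective : Function.Surjective π
  π_ker : ∀ a : A, π a = 0 ↔ a ∈ I
  q : X →ₗ[ℂ] Y
  q_surjective : Function.Surjective q
  q_ker : ∀ ξ : X, q ξ = 0 ↔ ξ ∈ idealSub X (I : Set A)
  q_inner : ∀ ξ ζ : X, inner (A := B) (q ξ) (q ζ) = π (inner (A := A) ξ ζ)
  q_rsmul : ∀ (ξ : X) (a : A), q (rsmul ξ a) = rsmul (q ξ) (π a)


/-- Quotient data compatible with the left actions (presenting `X_I` as a
C*-correspondence over `A/I`). -/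
structure CorrQuotientData (A B : Type*) [CStarAlgebra A] [CStarAlgebra B]
    (I : TwoSidedIdeal A)
    (X Y : Type*) [NormedAddCommGroup X] [NormedSpace ℂ X] [Correspondence A X]
    [NormedAddCommGroup Y] [NormedSpace ℂ Y] [Correspondence B Y]
    extends QuotientData A B I X Y where
  q_lsmul : ∀ (a : A) (ξ : X), q (lsmul a ξ) = lsmul (π a) (q ξ)

/-- Katsura's ideal `J(I) = {a : [φ_X(a)]_I ∈ K(X_I), a·X⁻¹(I) ⊂ I}`, expressed via
quotient data presenting `X_I`. -/
def JofI {A B : Type*} [CStarAlgebra A] [CStarAlgebra B] {I : TwoSidedIdeal A}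
    {X Y : Type*} [NormedAddCommGroup X] [NormedSpace ℂ X] [Correspondence A X]
    [NormedAddCommGroup Y] [NormedSpace ℂ Y] [HilbertModule B Y]
    (D : QuotientData A B I X Y) : Set A :=
  {a : A | (∃ T ∈ compacts B Y, ∀ ξ : X, T (D.q ξ) = D.q (lsmul a ξ)) ∧
    ∀ b ∈ corrInv X (I : Set A), a * b ∈ I}

/-- A Hilbert `A`-bimodule: a C*-correspondence together with a left inner product
satisfying `φ_X(⟪ξ,η⟫) = θ_{ξ,η}`. -/
class HilbertBimodule (A : Type*) [CStarAlgebra A] (X : Type*)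
    [NormedAddCommGroup X] [NormedSpace ℂ X] extends Correspondence A X where
  linner : X → X → A
  lsmul_linner : ∀ ξ η ζ : X, lsmul (linner ξ η) ζ = rsmul ξ (inner η ζ)

/-- The closed subspace `φ_X(S)X`: closed span of `{φ_X(a)ξ : a ∈ S}`. -/
def lsmulSet (X : Type*) {A : Type*} [CStarAlgebra A] [NormedAddCommGroup X]
    [NormedSpace ℂ X] [Correspondence A X] (S : Set A) : Set X :=
  closure (Submodule.span ℂ
    {x : X | ∃ a ∈ S, ∃ ξ : X, x = Correspondence.lsmul a ξ} : Set X)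


section Aux

namespace HilbertModule

variable {A : Type*} [CStarAlgebra A] {X : Type*}
  [NormedAddCommGroup X] [NormedSpace ℂ X] [HilbertModule A X]

lemma inner_sub_right' (x y z : X) :
    inner (A := A) x (y - z) = inner (A := A) x y - inner (A := A) x z := by
  have := inner_add_right (A := A) x (y - z) z
  rw [sub_add_cancel] at this
  rw [this]; abel

lemma inner_sub_left' (x y z : X) :
    inner (A := A) (x - y) z = inner (A := A) x z - inner (A := A) y z := by
  have := inner_add_left (A := A) (x - y) y z
  rw [sub_add_cancel] at this
  rw [this]; abel

lemma inner_rsmul_left' (x y : X) (a : A) :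
    inner (A := A) (rsmul x a) y = star a * inner (A := A) x y := by
  have h := congrArg star (inner_rsmul_right (A := A) y x a)
  rw [star_inner, star_mul] at h
  rw [h, star_inner]

lemma rsmul_zero' (x : X) : rsmul x (0 : A) = 0 := by
  have h := rsmul_add_right x (0 : A) 0
  rw [add_zero] at h
  exact left_eq_add.mp h

lemma norm_le_of_inner_le {x : X} {c : ℝ} (hc : 0 ≤ c)
    (h : ‖inner (A := A) x x‖ ≤ c ^ 2) : ‖x‖ ≤ c := by
  have h2 : ‖x‖ ^ 2 ≤ c ^ 2 := (norm_sq_inner x).le.trans h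
  nlinarith [norm_nonneg x]

end HilbertModule

end Aux

open HilbertModule in
/-- every element of the quotient Hilbert module `X_I` lifts to an element
of `X` of the same norm; in particular, the norm of `X_I` is the quotient norm. -/
theorem stmt2 {A B : Type*} [CStarAlgebra A] [CStarAlgebra B]
    {X Y : Type*} [NormedAddCommGroup X] [NormedSpace ℂ X] [HilbertModule A X]
    [NormedAddCommGroup Y] [NormedSpace ℂ Y] [HilbertModule B Y]
    [CompleteSpace X] [CompleteSpace Y]
    (I : TwoSidedIdeal A) (hI : IsClosed (I : Set A))
    (D : QuotientData A B I X Y) :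
    ∀ η : Y, (∃ ξ : X, D.q ξ = η ∧ ‖ξ‖ = ‖η‖) ∧ (∀ ξ : X, D.q ξ = η → ‖η‖ ≤ ‖ξ‖) := by
  have hπcont : Continuous D.π :=
    AddMonoidHomClass.continuous_of_bound D.π 1 fun a => by
      simpa [one_mul] using NonUnitalStarAlgHom.norm_apply_le D.π a
  intro η
  have easy : ∀ ξ : X, D.q ξ = η → ‖η‖ ≤ ‖ξ‖ := by
    intro ξ hξ
    have h1 : ‖η‖ ^ 2 = ‖inner (A := B) η η‖ := norm_sq_inner η
    have h2 : inner (A := B) η η = D.π (inner (A := A) ξ ξ) := by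
      rw [← hξ, D.q_inner]
    have h3 : ‖D.π (inner (A := A) ξ ξ)‖ ≤ ‖inner (A := A) ξ ξ‖ :=
      NonUnitalStarAlgHom.norm_apply_le D.π _
    have h4 : ‖η‖ ^ 2 ≤ ‖ξ‖ ^ 2 := by
      rw [h1, h2, norm_sq_inner (A := A) ξ]; exact h3
    nlinarith [norm_nonneg ξ, norm_nonneg η]
  refine ⟨?_, easy⟩
  by_cases hη : η = 0
  · exact ⟨0, by simp [hη], by simp [hη]⟩
  obtain ⟨ξ₀, hξ₀⟩ := D.q_surjective η
  set t : ℝ := ‖η‖ with ht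
  have ht0 : 0 < t := norm_pos_iff.mpr hη
  set a : A := inner (A := A) ξ₀ ξ₀ with ha
  obtain ⟨w, hw⟩ := inner_self_isPositive (A := A) ξ₀
  have hasa : IsSelfAdjoint a := by
    rw [ha, hw]; exact IsSelfAdjoint.star_mul_self w
  have hspecA : ∀ s ∈ spectrum ℝ a, 0 ≤ s := by
    rw [ha, hw]; exact spectrum_star_mul_self_nonneg
  -- the cut-off function
  set g : ℝ → ℝ := fun s => max 0 (1 - t / Real.sqrt (max s (t ^ 2))) with hgdef
  have hsqrt_pos : ∀ s : ℝ, 0 < Real.sqrt (max s (t ^ 2)) := fun s =>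
    Real.sqrt_pos.mpr (lt_of_lt_of_le (by positivity) (le_max_right _ _))
  have hgcont : Continuous g := by
    apply continuous_const.max
    apply continuous_const.sub
    exact continuous_const.div
      (Real.continuous_sqrt.comp (continuous_id.max continuous_const))
      fun s => (hsqrt_pos s).ne'
  have hg_small : ∀ s : ℝ, s ≤ t ^ 2 → g s = 0 := by
    intro s hs
    simp only [hgdef]
    rw [max_eq_right hs, Real.sqrt_sq ht0.le, div_self ht0.ne', sub_self, max_self]
  have hg_large : ∀ s : ℝ, t ^ 2 < s → g s = 1 - t / Real.sqrt s := by
    intro s hs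
    have h1 : max s (t ^ 2) = s := max_eq_left hs.le
    have ht_lt : t < Real.sqrt s := by
      rw [show t = Real.sqrt (t ^ 2) from (Real.sqrt_sq ht0.le).symm]
      exact Real.sqrt_lt_sqrt (by positivity) hs
    have h2 : t / Real.sqrt s ≤ 1 :=
      (div_le_one (lt_trans ht0 ht_lt)).mpr ht_lt.le
    simp only [hgdef, h1]
    rw [max_eq_right (by linarith)]
  set b : A := cfc g a with hb
  have hbsa : IsSelfAdjoint b := cfc_predicate g a
  set ξ : X := ξ₀ - rsmul ξ₀ b with hξdef
  -- the image of b under π is zero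
  have hπa : D.π a = inner (A := B) η η := by rw [ha, ← D.q_inner, hξ₀]
  have hπa_norm : ‖D.π a‖ = t ^ 2 := by
    rw [hπa, ← norm_sq_inner η]
  have hBnt : Nontrivial B := by
    refine nontrivial_of_ne (D.π a) 0 fun h => ?_
    rw [h, norm_zero] at hπa_norm
    exact (by positivity : (0:ℝ) < t ^ 2).ne' hπa_norm.symm
  have hspec : ∀ s ∈ spectrum ℝ (D.π a), g s = 0 := by
    intro s hs
    apply hg_small
    calc s ≤ ‖s‖ := le_abs_self s
      _ ≤ ‖D.π a‖ := spectrum.norm_le_norm_of_mem hs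
      _ = t ^ 2 := hπa_norm
  have hπb : D.π b = 0 := by
    rw [hb, StarAlgHom.map_cfc D.π g a hgcont.continuousOn hπcont hasa (hasa.map D.π)]
    rw [cfc_congr (g := fun _ => (0 : ℝ)) fun s hs => hspec s hs]
    exact cfc_const_zero ℝ (D.π a)
  have hqξ : D.q ξ = η := by
    rw [hξdef, map_sub, hξ₀, D.q_rsmul, hπb, HilbertModule.rsmul_zero', sub_zero]
  refine ⟨ξ, hqξ, le_antisymm ?_ (easy ξ hqξ)⟩
  -- norm estimate
  have hinner : inner (A := A) ξ ξ = (a - a * b) - (b * a - b * a * b) := by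
    rw [hξdef, HilbertModule.inner_sub_left', HilbertModule.inner_sub_right',
      HilbertModule.inner_sub_right', inner_rsmul_right, HilbertModule.inner_rsmul_left',
      HilbertModule.inner_rsmul_left', inner_rsmul_right, hbsa.star_eq, ← ha, mul_assoc]
  have hcfc : inner (A := A) ξ ξ
      = cfc (fun s => (s - s * g s) - (g s * s - g s * s * g s)) a := by
    have c1 : Continuous fun s : ℝ => s - s * g s := by
      exact continuous_id.sub (continuous_id.mul hgcont)
    have c2 : Continuous fun s : ℝ => g s * s - g s * s * g s := by
      exact (hgcont.mul continuous_id).sub ((hgcont.mul continuous_id).mul hgcont)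
    rw [cfc_sub (fun s : ℝ => s - s * g s) (fun s : ℝ => g s * s - g s * s * g s) a
        c1.continuousOn c2.continuousOn,
      cfc_sub (fun s : ℝ => s) (fun s : ℝ => s * g s) a
        continuous_id.continuousOn (continuous_id.mul hgcont).continuousOn,
      cfc_sub (fun s : ℝ => g s * s) (fun s : ℝ => g s * s * g s) a
        (hgcont.mul continuous_id).continuousOn
        ((hgcont.mul continuous_id).mul hgcont).continuousOn,
      cfc_mul (fun s : ℝ => s) g a continuous_id.continuousOn hgcont.continuousOn,
      cfc_mul (fun s : ℝ => g s * s) g a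
        (hgcont.mul continuous_id).continuousOn hgcont.continuousOn,
      cfc_mul g (fun s : ℝ => s) a hgcont.continuousOn continuous_id.continuousOn,
      cfc_id' ℝ a, hinner, hb]
  have hbound : ∀ s ∈ spectrum ℝ a, ‖(s - s * g s) - (g s * s - g s * s * g s)‖ ≤ t ^ 2 := by
    intro s hs
    have hs0 : 0 ≤ s := hspecA s hs
    have key : (s - s * g s) - (g s * s - g s * s * g s) = s * (1 - g s) ^ 2 := by ring
    rw [key, Real.norm_eq_abs]
    rcases le_or_gt s (t ^ 2) with h | h
    · rw [hg_small s h]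
      simp only [mul_zero, sub_zero, one_pow, mul_one]
      rw [abs_of_nonneg hs0]; exact h
    · rw [hg_large s h]
      have hsq : Real.sqrt s ^ 2 = s := Real.sq_sqrt hs0
      have hs_pos : 0 < s := lt_trans (by positivity) h
      have : s * (1 - (1 - t / Real.sqrt s)) ^ 2 = t ^ 2 := by
        have h1 : (1 : ℝ) - (1 - t / Real.sqrt s) = t / Real.sqrt s := by ring
        rw [h1, div_pow, hsq]
        field_simp
      rw [this, abs_of_nonneg (by positivity)]
  have hnorm : ‖inner (A := A) ξ ξ‖ ≤ t ^ 2 := by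
    rw [hcfc]; exact norm_cfc_le (by positivity) hbound
  exact HilbertModule.norm_le_of_inner_le ht0.le hnorm
end
end

section
/- Let A be a C*-algebra, X a Hilbert A-module, and I₁, I₂ closed ideals of A. The restriction of the quotient map [·]_{I₂/(I₁∩I₂)} : X_{I₁∩I₂} → X_{I₂} to the submodule X_{I₁∩I₂}·(I₁/(I₁∩I₂)) is a bijection onto X_{I₂}·((I₁+I₂)/I₂). -/
noncomputable section

open HilbertModule Correspondence

/-!
Write `σ : A/(I₁∩I₂) → A/I₂` for the quotient map of C⋆-algebras; the module map
`r : X_{I₁∩I₂} → X_{I₂}` lies over it, so `‖r z‖² = ‖σ ⟨z, z⟩‖ ≤ ‖⟨z, z⟩‖ = ‖z‖²`.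
The image of `I₁` in `A/(I₁∩I₂)` annihilates `ker σ`, the image of `I₂`, and so do all inner
products `⟨z, w⟩` with `w ∈ X_{I₁∩I₂}·(I₁/(I₁∩I₂))`. The annihilator of `ker σ` is a
C⋆-subalgebra on which `σ` is injective, hence isometric; so `r` is isometric on
`X_{I₁∩I₂}·(I₁/(I₁∩I₂))`. This gives injectivity, and makes the image complete, hence closed;
it contains the generators `ξ·[b]`, `b ∈ I₁`, of `X_{I₂}·((I₁+I₂)/I₂)`.
-/

namespace StarAlgHom

variable {R A B C : Type*} [CommRing R] [Ring A] [Algebra R A] [Star A]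
  [Ring B] [Algebra R B] [Star B] [Ring C] [Algebra R C] [Star C]

theorem apply_eq_of_ker_le (f : A →⋆ₐ[R] B) (g : A →⋆ₐ[R] C) (hfg : ∀ a, f a = 0 → g a = 0)
    {a a' : A} (h : f a = f a') : g a = g a' := by
  rw [← sub_eq_zero, ← map_sub] at h ⊢
  exact hfg _ h

def liftOfSurjective (f : A →⋆ₐ[R] B) (hf : Function.Surjective f) (g : A →⋆ₐ[R] C)
    (hfg : ∀ a, f a = 0 → g a = 0) : B →⋆ₐ[R] C where
  toFun b := g (Function.surjInv hf b)
  map_one' := by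
    rw [apply_eq_of_ker_le f g hfg (a' := 1) (by simp [Function.surjInv_eq]), map_one]
  map_mul' x y := by
    rw [apply_eq_of_ker_le f g hfg (a' := Function.surjInv hf x * Function.surjInv hf y)
      (by simp [Function.surjInv_eq]), map_mul]
  map_zero' := by
    rw [apply_eq_of_ker_le f g hfg (a' := 0) (by simp [Function.surjInv_eq]), map_zero]
  map_add' x y := by
    rw [apply_eq_of_ker_le f g hfg (a' := Function.surjInv hf x + Function.surjInv hf y)
      (by simp [Function.surjInv_eq]), map_add]
  commutes' t := by
    rw [apply_eq_of_ker_le f g hfg (a' := algebraMap R A t)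
      (by rw [Function.surjInv_eq hf, AlgHomClass.commutes]),
      AlgHomClass.commutes]
  map_star' x := by
    rw [apply_eq_of_ker_le f g hfg (a' := star (Function.surjInv hf x))
      (by rw [map_star, Function.surjInv_eq hf, Function.surjInv_eq hf]), map_star]

@[simp]
theorem liftOfSurjective_apply (f : A →⋆ₐ[R] B) (hf : Function.Surjective f)
    (g : A →⋆ₐ[R] C) (hfg : ∀ a, f a = 0 → g a = 0) (a : A) :
    liftOfSurjective f hf g hfg (f a) = g a :=
  apply_eq_of_ker_le f g hfg (Function.surjInv_eq hf _)

end StarAlgHom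

section KerAnnihilator

variable (R : Type*) {A B F : Type*} [CommSemiring R] [NonUnitalSemiring A] [StarRing A]
  [Module R A] [IsScalarTower R A A] [SMulCommClass R A A]
  [NonUnitalNonAssocSemiring B] [StarAddMonoid B] [FunLike F A B] [StarHomClass F A B]

def kerAnnihilator (φ : F) : NonUnitalStarSubalgebra R A where
  carrier := {a | ∀ k, φ k = 0 → a * k = 0 ∧ k * a = 0}
  zero_mem' _ _ := ⟨zero_mul _, mul_zero _⟩
  add_mem' ha hb k hk := ⟨by rw [add_mul, (ha k hk).1, (hb k hk).1, add_zero],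
    by rw [mul_add, (ha k hk).2, (hb k hk).2, add_zero]⟩
  mul_mem' ha hb k hk := ⟨by rw [mul_assoc, (hb k hk).1, mul_zero],
    by rw [← mul_assoc, (ha k hk).2, zero_mul]⟩
  smul_mem' t a ha k hk := ⟨by rw [smul_mul_assoc, (ha k hk).1, smul_zero],
    by rw [mul_smul_comm, (ha k hk).2, smul_zero]⟩
  star_mem' ha k hk := by
    have hk' : φ (star k) = 0 := by rw [map_star, hk, star_zero]
    exact ⟨by rw [← star_star k, ← star_mul, (ha _ hk').2, star_zero],
      by rw [← star_star k, ← star_mul, (ha _ hk').1, star_zero]⟩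

variable {R}

theorem mem_kerAnnihilator {φ : F} {a : A} :
    a ∈ kerAnnihilator R φ ↔ ∀ k, φ k = 0 → a * k = 0 ∧ k * a = 0 :=
  Iff.rfl

theorem mul_mem_kerAnnihilator_left [MulHomClass F A B] {φ : F} (c : A) {a : A}
    (ha : a ∈ kerAnnihilator R φ) : c * a ∈ kerAnnihilator R φ := fun k hk =>
  have hkc : φ (k * c) = 0 := by rw [map_mul, hk, zero_mul]
  ⟨by rw [mul_assoc, (ha k hk).1, mul_zero], by rw [← mul_assoc, (ha _ hkc).2]⟩

theorem isClosed_kerAnnihilator [TopologicalSpace A] [ContinuousMul A] [T1Space A] (φ : F) :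
    IsClosed (kerAnnihilator R φ : Set A) := by
  have h : (kerAnnihilator R φ : Set A) =
      ⋂ k ∈ {k | φ k = 0}, ({a | a * k = 0} ∩ {a | k * a = 0}) := by
    ext a
    simp only [Set.mem_iInter, Set.mem_inter_iff, Set.mem_ofPred_eq, SetLike.mem_coe]
    exact mem_kerAnnihilator
  rw [h]
  exact isClosed_biInter fun k _ =>
    (isClosed_singleton.preimage (continuous_mul_const k)).inter
      (isClosed_singleton.preimage (continuous_const_mul k))

end KerAnnihilator

section CStarAlgebra

variable {A B F : Type*} [NonUnitalCStarAlgebra A] [NonUnitalCStarAlgebra B] [FunLike F A B]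
  [NonUnitalAlgHomClass F ℂ A B] [StarHomClass F A B]

theorem norm_map_of_mem_kerAnnihilator (φ : F) {a : A} (ha : a ∈ kerAnnihilator ℂ φ) :
    ‖φ a‖ = ‖a‖ := by
  have := isClosed_kerAnnihilator (R := ℂ) φ
  let ψ : kerAnnihilator ℂ φ →⋆ₙₐ[ℂ] B :=
    (φ : A →⋆ₙₐ[ℂ] B).comp (NonUnitalStarSubalgebraClass.subtype (kerAnnihilator ℂ φ))
  have hψ : Function.Injective ψ := by
    refine (injective_iff_map_eq_zero ψ).mpr fun ⟨c, hc⟩ hψc => ?_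
    have hstar : φ (star c) = 0 := by rw [map_star, show φ c = 0 from hψc, star_zero]
    have hcc : ‖c‖ * ‖c‖ = 0 := by rw [← CStarRing.norm_self_mul_star, (hc _ hstar).1, norm_zero]
    exact Subtype.ext (norm_eq_zero.mp (mul_self_eq_zero.mp hcc))
  exact NonUnitalStarAlgHom.norm_map ψ hψ ⟨a, ha⟩

end CStarAlgebra

namespace HilbertModule

section Submodule

variable {A : Type*} [CStarAlgebra A] {X : Type*} [NormedAddCommGroup X] [NormedSpace ℂ X]
  [HilbertModule A X]

variable (X) in
def idealSubmodule (S : Set A) : Submodule ℂ X :=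
  (Submodule.span ℂ {x : X | ∃ (ξ : X) (a : A), a ∈ S ∧ x = rsmul ξ a}).topologicalClosure

theorem coe_idealSubmodule (S : Set A) : (idealSubmodule X S : Set X) = idealSub X S :=
  Submodule.topologicalClosure_coe _

theorem rsmul_mem_idealSub {S : Set A} (ξ : X) {a : A} (ha : a ∈ S) :
    rsmul ξ a ∈ idealSub X S :=
  subset_closure (Submodule.subset_span ⟨ξ, a, ha, rfl⟩)

theorem idealSub_subset {S : Set A} {P : Submodule ℂ X} (hP : IsClosed (P : Set X))
    (hgen : ∀ (ξ : X), ∀ a ∈ S, rsmul ξ a ∈ P) : idealSub X S ⊆ P :=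
  closure_minimal (Submodule.span_le.mpr fun _ ⟨ξ, a, ha, hx⟩ => hx ▸ hgen ξ a ha) hP

def innerCLM (z : X) : X →L[ℂ] A :=
  LinearMap.mkContinuous
    { toFun := inner z
      map_add' := inner_add_right z
      map_smul' := fun c w => inner_csmul_right c z w }
    ‖z‖ (norm_inner_le z)

theorem inner_mem_of_mem_idealSub {S : Set A} {P : Submodule ℂ A} (hP : IsClosed (P : Set A))
    (hmul : ∀ c, ∀ a ∈ S, c * a ∈ P) (z : X) {w : X} (hw : w ∈ idealSub X S) :
    inner z w ∈ P := by
  refine idealSub_subset (P := P.comap (innerCLM z).toLinearMap)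
    (hP.preimage (innerCLM z).continuous) (fun ξ a ha => ?_) hw
  change inner z (rsmul ξ a) ∈ P
  rw [inner_rsmul_right]
  exact hmul _ a ha

end Submodule

section Map

variable {C B : Type*} [CStarAlgebra C] [CStarAlgebra B]
  {Z Y : Type*} [NormedAddCommGroup Z] [NormedSpace ℂ Z] [HilbertModule C Z]
  [NormedAddCommGroup Y] [NormedSpace ℂ Y] [HilbertModule B Y]
  {σ : C →⋆ₐ[ℂ] B} {r : Z →ₗ[ℂ] Y}

theorem norm_sq_map_eq (hinner : ∀ z, inner (r z) (r z) = σ (inner z z)) (z : Z) :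
    ‖r z‖ ^ 2 = ‖σ (inner z z)‖ := by
  rw [norm_sq_inner (A := B), hinner]

theorem norm_map_le (hinner : ∀ z, inner (r z) (r z) = σ (inner z z)) (z : Z) :
    ‖r z‖ ≤ ‖z‖ := by
  refine (pow_le_pow_iff_left₀ (norm_nonneg _) (norm_nonneg _) two_ne_zero).mp ?_
  rw [norm_sq_map_eq hinner, norm_sq_inner (A := C)]
  exact NonUnitalStarAlgHom.norm_apply_le σ _

theorem norm_map_eq_of_inner_self_mem (hinner : ∀ z, inner (r z) (r z) = σ (inner z z))
    {z : Z} (hz : inner z z ∈ kerAnnihilator ℂ σ) : ‖r z‖ = ‖z‖ := by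
  refine (pow_left_inj₀ (norm_nonneg _) (norm_nonneg _) two_ne_zero).mp ?_
  rw [norm_sq_map_eq hinner, norm_sq_inner (A := C), norm_map_of_mem_kerAnnihilator σ hz]

theorem bijOn_idealSub [CompleteSpace Z] (hr : Function.Surjective r)
    (hinner : ∀ z, inner (r z) (r z) = σ (inner z z))
    (hrsmul : ∀ z c, r (rsmul z c) = rsmul (r z) (σ c))
    {S : Set C} (hS : S ⊆ kerAnnihilator ℂ σ) :
    Set.BijOn r (idealSub Z S) (idealSub Y (σ '' S)) := by
  have hcont : Continuous r :=
    AddMonoidHomClass.continuous_of_bound r 1 fun z => by rw [one_mul]; exact norm_map_le hinner z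
  set N := idealSubmodule Z S
  have hN : (N : Set Z) = idealSub Z S := coe_idealSubmodule S
  have hiso : ∀ z ∈ N, ‖r z‖ = ‖z‖ := fun z hz =>
    norm_map_eq_of_inner_self_mem hinner <|
      inner_mem_of_mem_idealSub (P := (kerAnnihilator ℂ σ).toNonUnitalSubalgebra.toSubmodule)
        (isClosed_kerAnnihilator (R := ℂ) σ)
        (fun c a ha => mul_mem_kerAnnihilator_left c (hS ha)) z (hN ▸ SetLike.mem_coe.mpr hz)
  refine ⟨?mapsTo, ?injOn, ?surjOn⟩
  case mapsTo =>
    have hP : IsClosed ((idealSubmodule Y (σ '' S)).comap r : Set Z) := by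
      rw [Submodule.comap_coe, coe_idealSubmodule]
      exact isClosed_closure.preimage hcont
    intro z hz
    rw [← coe_idealSubmodule]
    refine idealSub_subset hP (fun ξ a ha => ?_) hz
    rw [Submodule.mem_comap, hrsmul, ← SetLike.mem_coe, coe_idealSubmodule]
    exact rsmul_mem_idealSub _ (Set.mem_image_of_mem σ ha)
  case injOn =>
    intro z hz z' hz' hzz'
    rw [← hN] at hz hz'
    have : ‖z - z'‖ = 0 := by
      rw [← hiso _ (N.sub_mem hz hz'), map_sub, hzz', sub_self, norm_zero]
    exact sub_eq_zero.mp (norm_eq_zero.mp this)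
  case surjOn =>
    have hclosed : IsClosed (N.map r : Set Y) := by
      have : CompleteSpace N := (Submodule.isClosed_topologicalClosure _).completeSpace_coe
      have hisom : Isometry (r.comp N.subtype) :=
        AddMonoidHomClass.isometry_of_norm _ fun z => hiso z z.2
      rw [Submodule.map_coe, ← Subtype.range_coe (s := (N : Set Z)), ← Set.range_comp]
      exact hisom.isClosedEmbedding.isClosed_range
    rw [← hN]
    refine idealSub_subset (P := N.map r) hclosed fun η a ⟨c, hc, hca⟩ => ?_
    obtain ⟨ζ, rfl⟩ := hr η
    refine ⟨rsmul ζ c, ?_, ?_⟩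
    · rw [hN]; exact rsmul_mem_idealSub ζ hc
    · rw [hrsmul, hca]

end Map

end HilbertModule

namespace QuotientData

variable {A B C : Type*} [CStarAlgebra A] [CStarAlgebra B] [CStarAlgebra C]
  {X Y Z : Type*} [NormedAddCommGroup X] [NormedSpace ℂ X] [HilbertModule A X]
  [NormedAddCommGroup Y] [NormedSpace ℂ Y] [HilbertModule B Y]
  [NormedAddCommGroup Z] [NormedSpace ℂ Z] [HilbertModule C Z]
  {I J : TwoSidedIdeal A}

def liftπ (D : QuotientData A C J X Z) (E : QuotientData A B I X Y) (hJI : J ≤ I) :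
    C →⋆ₐ[ℂ] B :=
  StarAlgHom.liftOfSurjective D.π D.π_surjective E.π fun a ha =>
    (E.π_ker a).mpr (hJI ((D.π_ker a).mp ha))

@[simp]
theorem liftπ_apply (D : QuotientData A C J X Z) (E : QuotientData A B I X Y) (hJI : J ≤ I)
    (a : A) : D.liftπ E hJI (D.π a) = E.π a :=
  StarAlgHom.liftOfSurjective_apply _ _ _ _ a

theorem image_liftπ_image (D : QuotientData A C J X Z) (E : QuotientData A B I X Y)
    (hJI : J ≤ I) (I₁ : TwoSidedIdeal A) :
    D.liftπ E hJI '' (D.π '' (I₁ : Set A)) =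
      E.π '' {a : A | ∃ b ∈ (I₁ : Set A), ∃ c ∈ (I : Set A), a = b + c} := by
  rw [Set.image_image]
  ext y
  constructor
  · rintro ⟨b, hb, rfl⟩
    exact ⟨b, ⟨b, hb, 0, I.zero_mem, (add_zero b).symm⟩, (liftπ_apply D E hJI b).symm⟩
  · rintro ⟨_, ⟨b, hb, c, hc, rfl⟩, rfl⟩
    exact ⟨b, hb, by simp only [liftπ_apply, map_add, (E.π_ker c).mpr hc, add_zero]⟩

theorem image_subset_kerAnnihilator (I₁ : TwoSidedIdeal A) (D : QuotientData A C (I₁ ⊓ I) X Z)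
    (E : QuotientData A B I X Y) :
    D.π '' (I₁ : Set A) ⊆ kerAnnihilator ℂ (D.liftπ E inf_le_right) := by
  rintro _ ⟨b, hb, rfl⟩ k hk
  obtain ⟨a, rfl⟩ := D.π_surjective k
  have ha : a ∈ I := (E.π_ker a).mp (liftπ_apply D E _ a ▸ hk)
  simp only [← map_mul, D.π_ker, TwoSidedIdeal.mem_inf]
  exact ⟨⟨I₁.mul_mem_right _ _ hb, I.mul_mem_left _ _ ha⟩,
    ⟨I₁.mul_mem_left _ _ hb, I.mul_mem_right _ _ ha⟩⟩

end QuotientData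

open HilbertModule in
theorem stmt4_general {A C B₂ : Type*} [CStarAlgebra A] [CStarAlgebra C] [CStarAlgebra B₂]
    {X Z Y₂ : Type*} [NormedAddCommGroup X] [NormedSpace ℂ X] [HilbertModule A X]
    [NormedAddCommGroup Z] [NormedSpace ℂ Z] [HilbertModule C Z]
    [NormedAddCommGroup Y₂] [NormedSpace ℂ Y₂] [HilbertModule B₂ Y₂]
    [CompleteSpace Z]
    (I₁ I₂ : TwoSidedIdeal A)
    (D : QuotientData A C (I₁ ⊓ I₂) X Z)   -- `Z` is `X_{I₁∩I₂}`
    (E : QuotientData A B₂ I₂ X Y₂)        -- `Y₂` is `X_{I₂}`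
    (r : Z →ₗ[ℂ] Y₂) (hr : ∀ ξ : X, r (D.q ξ) = E.q ξ) :
    Set.BijOn r (idealSub Z (⇑D.π '' (I₁ : Set A)))
      (idealSub Y₂ (⇑E.π '' {a : A | ∃ b ∈ (I₁ : Set A), ∃ c ∈ (I₂ : Set A), a = b + c})) := by
  set σ := D.liftπ E inf_le_right
  have hr_surj : Function.Surjective r := fun y =>
    let ⟨ξ, hξ⟩ := E.q_surjective y
    ⟨D.q ξ, (hr ξ).trans hξ⟩
  have hinner : ∀ z, inner (r z) (r z) = σ (inner z z) := by
    intro z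
    obtain ⟨ξ, rfl⟩ := D.q_surjective z
    rw [hr, E.q_inner, D.q_inner, QuotientData.liftπ_apply]
  have hrsmul : ∀ z c, r (rsmul z c) = rsmul (r z) (σ c) := by
    intro z c
    obtain ⟨ξ, rfl⟩ := D.q_surjective z
    obtain ⟨a, rfl⟩ := D.π_surjective c
    rw [← D.q_rsmul, hr, hr, E.q_rsmul, QuotientData.liftπ_apply]
  rw [← QuotientData.image_liftπ_image D E inf_le_right I₁]
  exact bijOn_idealSub hr_surj hinner hrsmul (QuotientData.image_subset_kerAnnihilator I₁ D E)

open HilbertModule in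
/-- the restriction of the quotient map
`[·]_{I₂/(I₁∩I₂)} : X_{I₁∩I₂} → X_{I₂}` to `X_{I₁∩I₂}·(I₁/(I₁∩I₂))` is a bijection
onto `X_{I₂}·((I₁+I₂)/I₂)`. -/
theorem stmt4 {A C B₂ : Type*} [CStarAlgebra A] [CStarAlgebra C] [CStarAlgebra B₂]
    {X Z Y₂ : Type*} [NormedAddCommGroup X] [NormedSpace ℂ X] [HilbertModule A X]
    [NormedAddCommGroup Z] [NormedSpace ℂ Z] [HilbertModule C Z]
    [NormedAddCommGroup Y₂] [NormedSpace ℂ Y₂] [HilbertModule B₂ Y₂]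
    [CompleteSpace X] [CompleteSpace Z] [CompleteSpace Y₂]
    (I₁ I₂ : TwoSidedIdeal A)
    (hI₁ : IsClosed (I₁ : Set A)) (hI₂ : IsClosed (I₂ : Set A))
    (D : QuotientData A C (I₁ ⊓ I₂) X Z)   -- `Z` is `X_{I₁∩I₂}`
    (E : QuotientData A B₂ I₂ X Y₂)        -- `Y₂` is `X_{I₂}`
    (r : Z →ₗ[ℂ] Y₂) (hr : ∀ ξ : X, r (D.q ξ) = E.q ξ) :
    Set.BijOn r (idealSub Z (⇑D.π '' (I₁ : Set A)))
      (idealSub Y₂ (⇑E.π '' {a : A | ∃ b ∈ (I₁ : Set A), ∃ c ∈ (I₂ : Set A), a = b + c})) :=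
  stmt4_general I₁ I₂ D E r hr
end
end

section
/- Let A be a C*-algebra, X a Hilbert A-module, I₁, I₂ closed ideals of A, and B the pull-back C*-algebra B = {(b₁,b₂) ∈ A/I₁ ⊕ A/I₂ : [b₁]_{(I₁+I₂)/I₁} = [b₂]_{(I₁+I₂)/I₂}}. Let Y = {(η₁,η₂) ∈ X_{I₁} ⊕ X_{I₂} : [η₁]_{(I₁+I₂)/I₁} = [η₂]_{(I₁+I₂)/I₂}}, a Hilbert B-module with coordinatewise operations. Then the map T : X_{I₁∩I₂} → Y defined by T(η) = ([η]_{I₁/(I₁∩I₂)}, [η]_{I₂/(I₁∩I₂)}) is an isomorphism of Hilbert B-modules, where X_{I₁∩I₂} is viewed as a Hilbert B-module via the isomorphism A/(I₁∩I₂) ≅ B. -/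
noncomputable section

open HilbertModule Correspondence

/-!
Since `I₁ ∩ I₂` is the kernel of `A → A/I₁ ⊕ A/I₂`, the induced `*`-homomorphism
`A/(I₁ ∩ I₂) → A/I₁ ⊕ A/I₂` is injective, hence isometric; through `‖z‖² = ‖⟨z, z⟩‖` the map
`T` is then isometric as well, so it is injective and, its domain being complete, has closed
range. If `[ξ₁]` and `[ξ₂]` agree in `X_{I₁+I₂}`, then `ξ₁ - ξ₂` lies in the closure of
`X·I₁ + X·I₂`, and approximating it there exhibits `([ξ₁], [ξ₂])` as a limit of values of `T`.
-/

namespace HilbertModule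

variable {A : Type*} [CStarAlgebra A] {X : Type*}
  [NormedAddCommGroup X] [NormedSpace ℂ X] [HilbertModule A X]

-- `idealSub X S` is by definition the closure of this submodule.
def rsmulSpan (X : Type*) [NormedAddCommGroup X] [NormedSpace ℂ X] [HilbertModule A X]
    (S : Set A) : Submodule ℂ X :=
  Submodule.span ℂ {x : X | ∃ (ξ : X) (a : A), a ∈ S ∧ x = rsmul ξ a}

lemma idealSub_add_subset (S T : Set A) :
    idealSub X {a : A | ∃ b ∈ S, ∃ c ∈ T, a = b + c} ⊆
      closure ((rsmulSpan X S ⊔ rsmulSpan X T : Submodule ℂ X) : Set X) := by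
  refine closure_mono (Submodule.span_le.2 ?_)
  rintro _ ⟨ξ, _, ⟨b, hb, c, hc, rfl⟩, rfl⟩
  rw [SetLike.mem_coe, rsmul_add_right]
  exact Submodule.add_mem_sup (Submodule.subset_span ⟨ξ, b, hb, rfl⟩)
    (Submodule.subset_span ⟨ξ, c, hc, rfl⟩)

variable {B : Type*} [CStarAlgebra B] {Y : Type*}
  [NormedAddCommGroup Y] [NormedSpace ℂ Y] [HilbertModule B Y]

lemma norm_sq_of_inner_map {s : X → Y} {σ : A →⋆ₐ[ℂ] B}
    (hs : ∀ x x' : X, inner (A := B) (s x) (s x') = σ (inner (A := A) x x')) (x : X) :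
    ‖s x‖ ^ 2 = ‖σ (inner (A := A) x x)‖ := by
  rw [norm_sq_inner (A := B), hs]

lemma norm_eq_max_of_inner_map {B₂ Y₂ : Type*} [CStarAlgebra B₂]
    [NormedAddCommGroup Y₂] [NormedSpace ℂ Y₂] [HilbertModule B₂ Y₂]
    {s₁ : X → Y} {s₂ : X → Y₂} {σ₁ : A →⋆ₐ[ℂ] B} {σ₂ : A →⋆ₐ[ℂ] B₂}
    (hs₁ : ∀ x x' : X, inner (A := B) (s₁ x) (s₁ x') = σ₁ (inner (A := A) x x'))
    (hs₂ : ∀ x x' : X, inner (A := B₂) (s₂ x) (s₂ x') = σ₂ (inner (A := A) x x'))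
    (hσ : ∀ a : A, ‖a‖ = max ‖σ₁ a‖ ‖σ₂ a‖) (x : X) :
    ‖x‖ = max ‖s₁ x‖ ‖s₂ x‖ := by
  refine (sq_eq_sq₀ (norm_nonneg _) (le_max_of_le_left (norm_nonneg _))).1 ?_
  rw [norm_sq_inner (A := A), hσ, ← norm_sq_of_inner_map hs₁, ← norm_sq_of_inner_map hs₂,
    pow_left_monotoneOn.map_max (norm_nonneg (s₁ x)) (norm_nonneg (s₂ x))]

end HilbertModule

lemma StarAlgHom.norm_eq_max_of_injective {A B₁ B₂ : Type*} [CStarAlgebra A]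
    [CStarAlgebra B₁] [CStarAlgebra B₂] (σ₁ : A →⋆ₐ[ℂ] B₁) (σ₂ : A →⋆ₐ[ℂ] B₂)
    (h : ∀ a : A, σ₁ a = 0 → σ₂ a = 0 → a = 0) (a : A) :
    ‖a‖ = max ‖σ₁ a‖ ‖σ₂ a‖ := by
  have hinj : Function.Injective (σ₁.prod σ₂) :=
    (injective_iff_map_eq_zero _).2 fun a ha =>
      h a (congrArg Prod.fst ha) (congrArg Prod.snd ha)
  exact (NonUnitalStarAlgHom.norm_map (σ₁.prod σ₂) hinj a).symm

namespace QuotientData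

variable {A B : Type*} [CStarAlgebra A] [CStarAlgebra B] {I : TwoSidedIdeal A}
  {X Y : Type*} [NormedAddCommGroup X] [NormedSpace ℂ X] [HilbertModule A X]
  [NormedAddCommGroup Y] [NormedSpace ℂ Y] [HilbertModule B Y]
  (D : QuotientData A B I X Y)

lemma q_eq_zero_of_mem_rsmulSpan {ξ : X} (h : ξ ∈ rsmulSpan X (I : Set A)) : D.q ξ = 0 :=
  (D.q_ker ξ).2 (subset_closure h)

lemma norm_q_le (ξ : X) : ‖D.q ξ‖ ≤ ‖ξ‖ := by
  refine (pow_le_pow_iff_left₀ (norm_nonneg _) (norm_nonneg _) two_ne_zero).1 ?_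
  rw [norm_sq_inner (A := B), D.q_inner, norm_sq_inner (A := A)]
  exact NonUnitalStarAlgHom.norm_apply_le D.π _

lemma continuous_q : Continuous D.q :=
  AddMonoidHomClass.continuous_of_bound D.q 1 fun ξ => by
    rw [one_mul]
    exact D.norm_q_le ξ

section Comparison

variable {C Z : Type*} [CStarAlgebra C] [NormedAddCommGroup Z] [NormedSpace ℂ Z]
  [HilbertModule C Z] {J : TwoSidedIdeal A} (E : QuotientData A C J X Z)
  {s : Z →ₗ[ℂ] Y} {σ : C →⋆ₐ[ℂ] B}

lemma inner_map_of_comp (hs : ∀ ξ : X, s (E.q ξ) = D.q ξ) (hσ : ∀ a : A, σ (E.π a) = D.π a)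
    (z z' : Z) : inner (A := B) (s z) (s z') = σ (inner (A := C) z z') := by
  obtain ⟨ξ, rfl⟩ := E.q_surjective z
  obtain ⟨ξ', rfl⟩ := E.q_surjective z'
  rw [hs, hs, D.q_inner, E.q_inner, hσ]

lemma map_rsmul_of_comp (hs : ∀ ξ : X, s (E.q ξ) = D.q ξ) (hσ : ∀ a : A, σ (E.π a) = D.π a)
    (z : Z) (c : C) : s (rsmul z c) = rsmul (s z) (σ c) := by
  obtain ⟨ξ, rfl⟩ := E.q_surjective z
  obtain ⟨a, rfl⟩ := E.π_surjective c
  rw [← E.q_rsmul, hs, D.q_rsmul, hσ, hs]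

end Comparison

end QuotientData

section Pullback

variable {A B₁ B₂ C : Type*} [CStarAlgebra A] [CStarAlgebra B₁] [CStarAlgebra B₂]
  [CStarAlgebra C] {X Y₁ Y₂ Z : Type*}
  [NormedAddCommGroup X] [NormedSpace ℂ X] [HilbertModule A X]
  [NormedAddCommGroup Y₁] [NormedSpace ℂ Y₁] [HilbertModule B₁ Y₁]
  [NormedAddCommGroup Y₂] [NormedSpace ℂ Y₂] [HilbertModule B₂ Y₂]
  [NormedAddCommGroup Z] [NormedSpace ℂ Z] [HilbertModule C Z]
  {I₁ I₂ : TwoSidedIdeal A}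

lemma QuotientData.eq_zero_of_comp_eq_zero (D : QuotientData A C (I₁ ⊓ I₂) X Z)
    (D₁ : QuotientData A B₁ I₁ X Y₁) (D₂ : QuotientData A B₂ I₂ X Y₂)
    {σ₁ : C →⋆ₐ[ℂ] B₁} (hσ₁ : ∀ a : A, σ₁ (D.π a) = D₁.π a)
    {σ₂ : C →⋆ₐ[ℂ] B₂} (hσ₂ : ∀ a : A, σ₂ (D.π a) = D₂.π a)
    (c : C) (h₁ : σ₁ c = 0) (h₂ : σ₂ c = 0) : c = 0 := by
  obtain ⟨a, rfl⟩ := D.π_surjective c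
  rw [hσ₁, D₁.π_ker] at h₁
  rw [hσ₂, D₂.π_ker] at h₂
  exact (D.π_ker a).2 ((TwoSidedIdeal.mem_inf (R := A)).2 ⟨h₁, h₂⟩)

lemma isClosed_range_prod_of_norm_eq_max [CompleteSpace Z]
    {s₁ : Z →ₗ[ℂ] Y₁} {s₂ : Z →ₗ[ℂ] Y₂} (h : ∀ z : Z, ‖z‖ = max ‖s₁ z‖ ‖s₂ z‖) :
    IsClosed (Set.range (s₁.prod s₂)) :=
  (AddMonoidHomClass.isometry_of_norm (s₁.prod s₂) fun z => (h z).symm)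
    |>.isUniformInducing.isComplete_range.isClosed

/- For `η₁ ∈ X·I₁`, `η₂ ∈ X·I₂` the pair `([ξ₁], [ξ₁ - η₁ - η₂])` is the image of
`[ξ₁ - η₁]`; letting `η₁ + η₂ → ξ₁ - ξ₂`, closedness of the image gives `([ξ₁], [ξ₂])`. -/
lemma exists_comp_eq_of_sub_mem_closure (D : QuotientData A C (I₁ ⊓ I₂) X Z)
    (D₁ : QuotientData A B₁ I₁ X Y₁) (D₂ : QuotientData A B₂ I₂ X Y₂)
    {s₁ : Z →ₗ[ℂ] Y₁} (hs₁ : ∀ ξ : X, s₁ (D.q ξ) = D₁.q ξ)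
    {s₂ : Z →ₗ[ℂ] Y₂} (hs₂ : ∀ ξ : X, s₂ (D.q ξ) = D₂.q ξ)
    (hclosed : IsClosed (Set.range (s₁.prod s₂))) {ξ₁ ξ₂ : X}
    (h : ξ₁ - ξ₂ ∈ closure
      ((rsmulSpan X (I₁ : Set A) ⊔ rsmulSpan X (I₂ : Set A) : Submodule ℂ X) : Set X)) :
    ∃ z : Z, s₁ z = D₁.q ξ₁ ∧ s₂ z = D₂.q ξ₂ := by
  let g : X → Y₁ × Y₂ := fun η => (D₁.q ξ₁, D₂.q (ξ₁ - η))
  have hg : Continuous g :=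
    continuous_const.prodMk (D₂.continuous_q.comp (continuous_const.sub continuous_id))
  have hmem : g (ξ₁ - ξ₂) ∈ Set.range (s₁.prod s₂) := by
    rw [← hclosed.closure_eq]
    refine map_mem_closure hg h ?_
    intro η hη
    obtain ⟨η₁, hη₁, η₂, hη₂, rfl⟩ := Submodule.mem_sup.1 hη
    refine ⟨D.q (ξ₁ - η₁), Prod.ext ?_ ?_⟩
    · show s₁ (D.q (ξ₁ - η₁)) = D₁.q ξ₁
      rw [hs₁, map_sub, D₁.q_eq_zero_of_mem_rsmulSpan hη₁, sub_zero]
    · show s₂ (D.q (ξ₁ - η₁)) = D₂.q (ξ₁ - (η₁ + η₂))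
      rw [hs₂, sub_add_eq_sub_sub, map_sub D₂.q (ξ₁ - η₁), D₂.q_eq_zero_of_mem_rsmulSpan hη₂,
        sub_zero]
  obtain ⟨z, hz⟩ := hmem
  refine ⟨z, congrArg Prod.fst hz, ?_⟩
  simpa [g] using congrArg Prod.snd hz

end Pullback

open HilbertModule in
theorem stmt5_general {A B₁ B₂ B₁₂ C : Type*} [CStarAlgebra A] [CStarAlgebra B₁]
    [CStarAlgebra B₂] [CStarAlgebra B₁₂] [CStarAlgebra C]
    {X Y₁ Y₂ Y₁₂ Z : Type*}
    [NormedAddCommGroup X] [NormedSpace ℂ X] [HilbertModule A X]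
    [NormedAddCommGroup Y₁] [NormedSpace ℂ Y₁] [HilbertModule B₁ Y₁]
    [NormedAddCommGroup Y₂] [NormedSpace ℂ Y₂] [HilbertModule B₂ Y₂]
    [NormedAddCommGroup Y₁₂] [NormedSpace ℂ Y₁₂] [HilbertModule B₁₂ Y₁₂]
    [NormedAddCommGroup Z] [NormedSpace ℂ Z] [HilbertModule C Z]
    [CompleteSpace Z]
    (I₁ I₂ I₁₂ : TwoSidedIdeal A)
    (hI₁₂ : (I₁₂ : Set A) = {a : A | ∃ b ∈ (I₁ : Set A), ∃ c ∈ (I₂ : Set A), a = b + c})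
    (D₁ : QuotientData A B₁ I₁ X Y₁)          -- `Y₁ = X_{I₁}`
    (D₂ : QuotientData A B₂ I₂ X Y₂)          -- `Y₂ = X_{I₂}`
    (D₁₂ : QuotientData A B₁₂ I₁₂ X Y₁₂)      -- `Y₁₂ = X_{I₁+I₂}`
    (D : QuotientData A C (I₁ ⊓ I₂) X Z)      -- `Z = X_{I₁∩I₂}`
    -- the canonical maps between the quotients:
    (r₁ : Y₁ →ₗ[ℂ] Y₁₂) (hr₁ : ∀ ξ : X, r₁ (D₁.q ξ) = D₁₂.q ξ)
    (r₂ : Y₂ →ₗ[ℂ] Y₁₂) (hr₂ : ∀ ξ : X, r₂ (D₂.q ξ) = D₁₂.q ξ)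
    (s₁ : Z →ₗ[ℂ] Y₁) (hs₁ : ∀ ξ : X, s₁ (D.q ξ) = D₁.q ξ)
    (s₂ : Z →ₗ[ℂ] Y₂) (hs₂ : ∀ ξ : X, s₂ (D.q ξ) = D₂.q ξ)
    (σ₁ : C →⋆ₐ[ℂ] B₁) (hσ₁ : ∀ a : A, σ₁ (D.π a) = D₁.π a)
    (σ₂ : C →⋆ₐ[ℂ] B₂) (hσ₂ : ∀ a : A, σ₂ (D.π a) = D₂.π a) :
    -- `T = (s₁, s₂)` is injective,
    (∀ z z' : Z, s₁ z = s₁ z' → s₂ z = s₂ z' → z = z') ∧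
    -- its range is exactly the pull-back module `Y`,
    (∀ z : Z, r₁ (s₁ z) = r₂ (s₂ z)) ∧
    (∀ (y₁ : Y₁) (y₂ : Y₂), r₁ y₁ = r₂ y₂ → ∃ z : Z, s₁ z = y₁ ∧ s₂ z = y₂) ∧
    -- and it preserves the inner products and the right actions:
    (∀ z z' : Z, inner (A := B₁) (s₁ z) (s₁ z') = σ₁ (inner (A := C) z z') ∧
        inner (A := B₂) (s₂ z) (s₂ z') = σ₂ (inner (A := C) z z')) ∧
    (∀ (z : Z) (c : C), s₁ (rsmul z c) = rsmul (s₁ z) (σ₁ c) ∧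
        s₂ (rsmul z c) = rsmul (s₂ z) (σ₂ c)) := by
  have hinner₁ := D₁.inner_map_of_comp D hs₁ hσ₁
  have hinner₂ := D₂.inner_map_of_comp D hs₂ hσ₂
  have hnorm : ∀ z : Z, ‖z‖ = max ‖s₁ z‖ ‖s₂ z‖ :=
    norm_eq_max_of_inner_map hinner₁ hinner₂ <| StarAlgHom.norm_eq_max_of_injective σ₁ σ₂ <|
      D.eq_zero_of_comp_eq_zero D₁ D₂ hσ₁ hσ₂
  refine ⟨?injective, ?range, ?surjective, fun z z' => ⟨hinner₁ z z', hinner₂ z z'⟩,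
    fun z c => ⟨D₁.map_rsmul_of_comp D hs₁ hσ₁ z c, D₂.map_rsmul_of_comp D hs₂ hσ₂ z c⟩⟩
  case injective =>
    intro z z' h₁ h₂
    rw [← sub_eq_zero, ← norm_eq_zero, hnorm, map_sub, map_sub, h₁, h₂]
    simp
  case range =>
    intro z
    obtain ⟨ξ, rfl⟩ := D.q_surjective z
    rw [hs₁, hs₂, hr₁, hr₂]
  case surjective =>
    intro y₁ y₂ h
    obtain ⟨ξ₁, rfl⟩ := D₁.q_surjective y₁
    obtain ⟨ξ₂, rfl⟩ := D₂.q_surjective y₂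
    have hmem : ξ₁ - ξ₂ ∈ idealSub X (I₁₂ : Set A) :=
      (D₁₂.q_ker _).1 (by rw [map_sub, ← hr₁, ← hr₂, h, sub_self])
    rw [hI₁₂] at hmem
    exact exists_comp_eq_of_sub_mem_closure D D₁ D₂ hs₁ hs₂
      (isClosed_range_prod_of_norm_eq_max hnorm) (idealSub_add_subset _ _ hmem)

open HilbertModule in
/-- the map `T : X_{I₁∩I₂} → Y`, `η ↦ ([η]_{I₁/(I₁∩I₂)}, [η]_{I₂/(I₁∩I₂)})`,
is an isomorphism of Hilbert `B`-modules onto the pull-back module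
`Y = {(η₁,η₂) : [η₁]_{(I₁+I₂)/I₁} = [η₂]_{(I₁+I₂)/I₂}}`: it is injective, its range is
exactly `Y`, and it preserves the inner products and the right actions (with respect to
the identification `A/(I₁∩I₂) ≅ B`). -/
theorem stmt5 {A B₁ B₂ B₁₂ C : Type*} [CStarAlgebra A] [CStarAlgebra B₁]
    [CStarAlgebra B₂] [CStarAlgebra B₁₂] [CStarAlgebra C]
    {X Y₁ Y₂ Y₁₂ Z : Type*}
    [NormedAddCommGroup X] [NormedSpace ℂ X] [HilbertModule A X]
    [NormedAddCommGroup Y₁] [NormedSpace ℂ Y₁] [HilbertModule B₁ Y₁]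
    [NormedAddCommGroup Y₂] [NormedSpace ℂ Y₂] [HilbertModule B₂ Y₂]
    [NormedAddCommGroup Y₁₂] [NormedSpace ℂ Y₁₂] [HilbertModule B₁₂ Y₁₂]
    [NormedAddCommGroup Z] [NormedSpace ℂ Z] [HilbertModule C Z]
    [CompleteSpace X] [CompleteSpace Y₁] [CompleteSpace Y₂] [CompleteSpace Y₁₂]
    [CompleteSpace Z]
    (I₁ I₂ I₁₂ : TwoSidedIdeal A)
    (hI₁ : IsClosed (I₁ : Set A)) (hI₂ : IsClosed (I₂ : Set A))
    (hI₁₂ : (I₁₂ : Set A) = {a : A | ∃ b ∈ (I₁ : Set A), ∃ c ∈ (I₂ : Set A), a = b + c})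
    (D₁ : QuotientData A B₁ I₁ X Y₁)          -- `Y₁ = X_{I₁}`
    (D₂ : QuotientData A B₂ I₂ X Y₂)          -- `Y₂ = X_{I₂}`
    (D₁₂ : QuotientData A B₁₂ I₁₂ X Y₁₂)      -- `Y₁₂ = X_{I₁+I₂}`
    (D : QuotientData A C (I₁ ⊓ I₂) X Z)      -- `Z = X_{I₁∩I₂}`
    -- the canonical maps between the quotients:
    (r₁ : Y₁ →ₗ[ℂ] Y₁₂) (hr₁ : ∀ ξ : X, r₁ (D₁.q ξ) = D₁₂.q ξ)
    (r₂ : Y₂ →ₗ[ℂ] Y₁₂) (hr₂ : ∀ ξ : X, r₂ (D₂.q ξ) = D₁₂.q ξ)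
    (s₁ : Z →ₗ[ℂ] Y₁) (hs₁ : ∀ ξ : X, s₁ (D.q ξ) = D₁.q ξ)
    (s₂ : Z →ₗ[ℂ] Y₂) (hs₂ : ∀ ξ : X, s₂ (D.q ξ) = D₂.q ξ)
    (σ₁ : C →⋆ₐ[ℂ] B₁) (hσ₁ : ∀ a : A, σ₁ (D.π a) = D₁.π a)
    (σ₂ : C →⋆ₐ[ℂ] B₂) (hσ₂ : ∀ a : A, σ₂ (D.π a) = D₂.π a) :
    -- `T = (s₁, s₂)` is injective,
    (∀ z z' : Z, s₁ z = s₁ z' → s₂ z = s₂ z' → z = z') ∧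
    -- its range is exactly the pull-back module `Y`,
    (∀ z : Z, r₁ (s₁ z) = r₂ (s₂ z)) ∧
    (∀ (y₁ : Y₁) (y₂ : Y₂), r₁ y₁ = r₂ y₂ → ∃ z : Z, s₁ z = y₁ ∧ s₂ z = y₂) ∧
    -- and it preserves the inner products and the right actions:
    (∀ z z' : Z, inner (A := B₁) (s₁ z) (s₁ z') = σ₁ (inner (A := C) z z') ∧
        inner (A := B₂) (s₂ z) (s₂ z') = σ₂ (inner (A := C) z z')) ∧
    (∀ (z : Z) (c : C), s₁ (rsmul z c) = rsmul (s₁ z) (σ₁ c) ∧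
        s₂ (rsmul z c) = rsmul (s₂ z) (σ₂ c)) :=
  stmt5_general I₁ I₂ I₁₂ hI₁₂ D₁ D₂ D₁₂ D r₁ hr₁ r₂ hr₂ s₁ hs₁ s₂ hs₂ σ₁ hσ₁ σ₂ hσ₂
end
end

section
/- Let D be a C*-algebra, {Iₙ}ₙ∈ℕ an increasing family of closed two-sided ideals of D, and B a C*-subalgebra of D. Then B ∩ (closure of ⋃ₙ Iₙ) equals the closure of ⋃ₙ (B ∩ Iₙ). -/
noncomputable section

open HilbertModule Correspondence

/-! Let `b ∈ B` lie in the closure of `⋃ Iₙ`. Approximate `c = b⋆b` within `δ` by a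
self-adjoint `w ∈ Iₙ`, and let `q = f(c)` for a continuous cutoff `f` vanishing on `(-∞, 2δ]`
and equal to `1` on `[3δ, ∞)`. Then `q ∈ B`, and `2δ q² ≤ qcq ≤ qwq + δ q²` gives `δ q² ≤ qwq`,
so `q ∈ Iₙ` because closed ideals are hereditary. Hence `bq ∈ B ∩ Iₙ`, and
`‖b - bq‖² = ‖(1 - q) c (1 - q)‖ ≤ 3δ`. -/

theorem Real.exists_continuous_cutoff (a : ℝ) {δ : ℝ} (hδ : 0 < δ) :
    ∃ f : ℝ → ℝ, Continuous f ∧ (∀ t, 0 ≤ f t ∧ f t ≤ 1) ∧ (∀ t ≤ a, f t = 0) ∧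
      ∀ t, a + δ ≤ t → f t = 1 := by
  refine ⟨fun t => Real.smoothTransition ((t - a) / δ), by fun_prop,
    fun t => ⟨Real.smoothTransition.nonneg _, Real.smoothTransition.le_one _⟩,
    fun t ht => Real.smoothTransition.zero_of_nonpos ?_,
    fun t ht => Real.smoothTransition.one_of_one_le ?_⟩
  · exact div_nonpos_of_nonpos_of_nonneg (by linarith) hδ.le
  · rw [le_div_iff₀ hδ]
    linarith

section CStarAlgebra

variable {A : Type*} [CStarAlgebra A]

namespace TwoSidedIdeal

/-- `I ∩ star I`, a star subalgebra in which functional calculus can be run before one knows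
that closed ideals are star-closed (which is itself proved by functional calculus). -/
def starCore (I : TwoSidedIdeal A) : NonUnitalStarSubalgebra ℂ A where
  carrier := I ∩ star (I : Set A)
  add_mem' hx hy := ⟨I.add_mem hx.1 hy.1, by simpa using I.add_mem hx.2 hy.2⟩
  zero_mem' := ⟨I.zero_mem, by simp⟩
  mul_mem' hx hy := ⟨I.mul_mem_left _ _ hy.1, by simpa using I.mul_mem_left _ _ hx.2⟩
  smul_mem' c x hx := ⟨by simpa using I.mul_mem_left (c • 1) _ hx.1,
    by simpa using I.mul_mem_left (star c • 1) _ hx.2⟩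
  star_mem' hx := ⟨hx.2, by simpa using hx.1⟩

protected lemma cfc_mem {I : TwoSidedIdeal A} (hI : IsClosed (I : Set A)) {a : A} (ha : a ∈ I)
    (ha' : IsSelfAdjoint a) {f : ℝ → ℝ} (hf : Continuous f) (hf0 : f 0 = 0) :
    cfc f a ∈ I := by
  have : IsClosed (I.starCore : Set A) := hI.inter (hI.preimage continuous_star)
  rw [← cfcₙ_eq_cfc]
  exact (cfcₙ_mem (𝕜 := ℝ) (𝕜' := ℂ) f (s := I.starCore)
    (show a ∈ I.starCore from ⟨ha, by simpa [ha'.star_eq] using ha⟩)).1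

end TwoSidedIdeal

variable [PartialOrder A] [StarOrderedRing A]

lemma norm_sub_mul_cfc_sq_le {x a : A} (hxa : star x * x ≤ a) {f : ℝ → ℝ} (hf : Continuous f)
    (hf01 : ∀ t, 0 ≤ f t ∧ f t ≤ 1) {η : ℝ} (hη : 0 ≤ η) (hf1 : ∀ t, η ≤ t → f t = 1) :
    ‖x - x * cfc f a‖ ^ 2 ≤ η := by
  have ha : 0 ≤ a := (star_mul_self_nonneg x).trans hxa
  have hxp : x - x * cfc f a = x * cfc (fun t => 1 - f t) a := by
    rw [cfc_sub (fun _ => 1) f a, cfc_const_one ℝ a, mul_sub, mul_one]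
  set p := cfc (fun t => 1 - f t) a
  have hp : IsSelfAdjoint p := cfc_predicate _ _
  calc ‖x - x * cfc f a‖ ^ 2 = ‖p * (star x * x) * p‖ := by
        rw [hxp, sq, ← CStarRing.norm_star_mul_self, star_mul, hp.star_eq]
        simp only [mul_assoc]
    _ ≤ ‖p * a * p‖ := by
        refine CStarAlgebra.norm_le_norm_of_nonneg_of_le ?_ ?_
        · simpa [hp.star_eq] using star_left_conjugate_nonneg (star_mul_self_nonneg x) p
        · simpa [hp.star_eq] using star_left_conjugate_le_conjugate hxa p
    _ = ‖cfc (fun t => (1 - f t) * t * (1 - f t)) a‖ := by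
        rw [cfc_mul _ _ a, cfc_mul _ _ a, cfc_id' ℝ a]
    _ ≤ η := by
        refine norm_cfc_le hη fun t ht => ?_
        have ht0 : 0 ≤ t := spectrum_nonneg_of_nonneg ha ht
        obtain ⟨hft0, hft1⟩ := hf01 t
        rcases le_or_gt η t with h | h
        · simp [hf1 t h, hη]
        · rw [Real.norm_of_nonneg (by positivity)]
          have hsq : (1 - f t) * (1 - f t) ≤ 1 := by nlinarith
          nlinarith [mul_le_mul_of_nonneg_left hsq ht0]

namespace TwoSidedIdeal

lemma mem_of_star_mul_self_le {I : TwoSidedIdeal A} (hI : IsClosed (I : Set A)) {x y : A}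
    (hy : y ∈ I) (hxy : star x * x ≤ y) : x ∈ I := by
  have hy0 : 0 ≤ y := (star_mul_self_nonneg x).trans hxy
  rw [← SetLike.mem_coe, ← hI.closure_eq, Metric.mem_closure_iff]
  intro ε hε
  obtain ⟨f, hf, hf01, hf0, hf1⟩ := Real.exists_continuous_cutoff 0 (by positivity : 0 < ε ^ 2 / 2)
  refine ⟨x * cfc f y,
    I.mul_mem_left _ _ (TwoSidedIdeal.cfc_mem hI hy hy0.isSelfAdjoint hf (hf0 0 le_rfl)), ?_⟩
  have h := norm_sub_mul_cfc_sq_le hxy hf hf01 (η := ε ^ 2 / 2) (by positivity)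
    (by simpa using hf1)
  rw [dist_eq_norm]
  exact lt_of_pow_lt_pow_left₀ 2 hε.le (by linarith [pow_pos hε 2])

lemma cfc_mem_of_norm_sub_le {I : TwoSidedIdeal A} (hI : IsClosed (I : Set A)) {c w : A}
    (hc : IsSelfAdjoint c) (hw : w ∈ I) (hw' : IsSelfAdjoint w) {δ : ℝ} (hδ : 0 < δ)
    (hcw : ‖c - w‖ ≤ δ) {f : ℝ → ℝ} (hf : Continuous f) (hf0 : ∀ t ≤ 2 * δ, f t = 0) :
    cfc f c ∈ I := by
  set q := cfc f c
  have hq : IsSelfAdjoint q := cfc_predicate _ _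
  have hqq : 0 ≤ q * q := by simpa [hq.star_eq] using star_mul_self_nonneg q
  have hlower : (2 * δ) • (q * q) ≤ q * c * q := by
    have e1 : cfc (fun t => 2 * δ * (f t * f t)) c = (2 * δ) • (q * q) := by
      rw [cfc_const_mul _ _ c, cfc_mul _ _ c]
    have e2 : cfc (fun t => f t * t * f t) c = q * c * q := by
      rw [cfc_mul _ _ c, cfc_mul _ _ c, cfc_id' ℝ c]
    rw [← e1, ← e2]
    refine cfc_mono fun t _ => ?_
    rcases le_or_gt t (2 * δ) with h | h
    · simp [hf0 t h]
    · nlinarith [mul_self_nonneg (f t)]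
  have hupper : q * c * q ≤ q * w * q + δ • (q * q) := by
    have h := CStarAlgebra.star_left_conjugate_le_norm_smul (a := q) (hc.sub hw')
    rw [hq.star_eq] at h
    calc q * c * q = q * w * q + q * (c - w) * q := by noncomm_ring
      _ ≤ q * w * q + ‖c - w‖ • (q * q) := by gcongr
      _ ≤ q * w * q + δ • (q * q) := by gcongr
  have hdom : star q * q ≤ δ⁻¹ • (q * w * q) := by
    have h : δ • (q * q) ≤ q * w * q := by
      have := hlower.trans hupper
      rw [two_mul, add_smul, add_comm] at this
      exact le_of_add_le_add_right this
    rw [hq.star_eq, ← inv_smul_smul₀ hδ.ne' (q * q)]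
    gcongr
  have hqwq : δ⁻¹ • (q * w * q) ∈ I := by
    simpa using I.mul_mem_left (δ⁻¹ • 1) _ (I.mul_mem_right _ _ (I.mul_mem_left _ _ hw))
  exact mem_of_star_mul_self_le hI hqwq hdom

end TwoSidedIdeal

lemma NonUnitalStarSubalgebra.exists_mem_inter_twoSidedIdeal_norm_sub_sq_le
    {B : NonUnitalStarSubalgebra ℂ A} (hB : IsClosed (B : Set A)) {I : TwoSidedIdeal A}
    (hI : IsClosed (I : Set A)) {b w : A} (hb : b ∈ B) (hw : w ∈ I) (hw' : IsSelfAdjoint w)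
    {δ : ℝ} (hδ : 0 < δ) (hbw : ‖star b * b - w‖ ≤ δ) :
    ∃ y ∈ (B : Set A) ∩ I, ‖b - y‖ ^ 2 ≤ 3 * δ := by
  obtain ⟨f, hf, hf01, hf0, hf1⟩ := Real.exists_continuous_cutoff (2 * δ) hδ
  have hqB : cfc f (star b * b) ∈ B := by
    have : IsClosed (B : Set A) := hB
    rw [← cfcₙ_eq_cfc (hf0 := hf0 0 (by positivity))]
    exact cfcₙ_mem (𝕜 := ℝ) (𝕜' := ℂ) f (mul_mem (star_mem hb) hb)
  have hqI : cfc f (star b * b) ∈ I :=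
    TwoSidedIdeal.cfc_mem_of_norm_sub_le hI (.star_mul_self b) hw hw' hδ hbw hf hf0
  refine ⟨b * cfc f (star b * b), ⟨mul_mem hb hqB, I.mul_mem_left _ _ hqI⟩, ?_⟩
  exact norm_sub_mul_cfc_sq_le le_rfl hf hf01 (by positivity) fun t ht => hf1 t (by linarith)

end CStarAlgebra

theorem NonUnitalStarSubalgebra.inter_closure_iUnion_twoSidedIdeal {A ι : Type*}
    [CStarAlgebra A] (I : ι → TwoSidedIdeal A) (hI : ∀ i, IsClosed (I i : Set A))
    (B : NonUnitalStarSubalgebra ℂ A) (hB : IsClosed (B : Set A)) :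
    (B : Set A) ∩ closure (⋃ i, (I i : Set A)) = closure (⋃ i, (B : Set A) ∩ I i) := by
  let : PartialOrder A := CStarAlgebra.spectralOrder A
  let : StarOrderedRing A := CStarAlgebra.spectralOrderedRing A
  refine subset_antisymm (fun b ⟨hbB, hbI⟩ => ?_) <| closure_minimal
    (Set.iUnion_subset fun i x hx => ⟨hx.1, subset_closure (Set.mem_iUnion_of_mem i hx.2)⟩)
    (hB.inter isClosed_closure)
  have hc : star b * b ∈ closure (⋃ i, {w ∈ (I i : Set A) | IsSelfAdjoint w}) :=
    map_mem_closure (f := fun x => star x * x) (by fun_prop) hbI fun x hx => by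
      obtain ⟨i, hxi⟩ := Set.mem_iUnion.1 hx
      exact Set.mem_iUnion_of_mem i ⟨(I i).mul_mem_left _ _ hxi, .star_mul_self x⟩
  rw [Metric.mem_closure_iff]
  intro ε hε
  obtain ⟨w, hw, hcw⟩ := Metric.mem_closure_iff.1 hc (ε ^ 2 / 6) (by positivity)
  obtain ⟨i, hwi, hw'⟩ := Set.mem_iUnion.1 hw
  obtain ⟨y, hy, hby⟩ := exists_mem_inter_twoSidedIdeal_norm_sub_sq_le hB (hI i) hbB hwi hw'
    (δ := ε ^ 2 / 6) (by positivity) (by rw [← dist_eq_norm]; exact hcw.le)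
  refine ⟨y, Set.mem_iUnion_of_mem i hy, ?_⟩
  rw [dist_eq_norm]
  exact lt_of_pow_lt_pow_left₀ 2 hε.le (by linarith [pow_pos hε 2])

theorem stmt7_general {D : Type*} [CStarAlgebra D]
    (I : ℕ → TwoSidedIdeal D)
    (hclosed : ∀ n, IsClosed ((I n : Set D)))
    (B : NonUnitalStarSubalgebra ℂ D) (hB : IsClosed (B : Set D)) :
    (B : Set D) ∩ closure (⋃ n, ((I n : Set D))) =
      closure (⋃ n, ((B : Set D) ∩ (I n : Set D))) :=
  B.inter_closure_iUnion_twoSidedIdeal I hclosed hB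

/-- for an increasing family of closed two-sided ideals `Iₙ` of a
C*-algebra `D` and a C*-subalgebra `B` of `D`,
`B ∩ lim Iₙ = lim (B ∩ Iₙ)`. -/
theorem stmt7 {D : Type*} [CStarAlgebra D]
    (I : ℕ → TwoSidedIdeal D) (hmono : Monotone I)
    (hclosed : ∀ n, IsClosed ((I n : Set D)))
    (B : NonUnitalStarSubalgebra ℂ D) (hB : IsClosed (B : Set D)) :
    (B : Set D) ∩ closure (⋃ n, ((I n : Set D))) =
      closure (⋃ n, ((B : Set D) ∩ (I n : Set D))) :=
  stmt7_general I hclosed B hB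
end
end

section
/- Let X be a C*-correspondence over A. For any closed ideal I of A, X^∞(I) := Σₙ Xⁿ(I) (the closure of the sum of the iterates X⁰(I)=I, X^{n+1}(I)=X(Xⁿ(I))) is the smallest positively invariant ideal of A containing I. -/
noncomputable section

open HilbertModule Correspondence

open HilbertModule Correspondence

variable {A : Type*} [CStarAlgebra A] {X : Type*} [NormedAddCommGroup X]
  [NormedSpace ℂ X] [Correspondence A X]

/-- The iterates `Xⁿ(I)`: `X⁰(I) = I`, `X^{n+1}(I) = X(Xⁿ(I))`. -/
def corrIter (X : Type*) {A : Type*} [CStarAlgebra A] [NormedAddCommGroup X]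
    [NormedSpace ℂ X] [Correspondence A X] (S : Set A) : ℕ → Set A
  | 0 => S
  | n + 1 => corrApply X (corrIter X S n)

/-- The partial sums `X⁰(I) + X¹(I) + ⋯ + Xⁿ(I)`. -/
def corrIterSum (X : Type*) {A : Type*} [CStarAlgebra A] [NormedAddCommGroup X]
    [NormedSpace ℂ X] [Correspondence A X] (S : Set A) : ℕ → Set A
  | 0 => S
  | n + 1 => {a : A | ∃ b ∈ corrIterSum X S n, ∃ c ∈ corrIter X S (n + 1), a = b + c}

/-- `X^∞(I) = Σₙ Xⁿ(I)` (the closure of the sum of the iterates). -/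
def corrIterLimit (X : Type*) {A : Type*} [CStarAlgebra A] [NormedAddCommGroup X]
    [NormedSpace ℂ X] [Correspondence A X] (S : Set A) : Set A :=
  closure (⋃ n, corrIterSum X S n)


/-- Ideal-like subsets of `A`. -/
structure IsIdlSet (S : Set A) : Prop where
  zero_mem : (0:A) ∈ S
  add_mem : ∀ {a b : A}, a ∈ S → b ∈ S → a + b ∈ S
  smul_mem : ∀ (c : ℂ) {a : A}, a ∈ S → c • a ∈ S
  mul_left : ∀ (b : A) {a : A}, a ∈ S → b * a ∈ S
  mul_right : ∀ (b : A) {a : A}, a ∈ S → a * b ∈ S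

lemma isIdlSet_coe (I : TwoSidedIdeal A) : IsIdlSet (I : Set A) where
  zero_mem := I.zero_mem
  add_mem := fun ha hb => I.add_mem ha hb
  smul_mem := fun c {a} ha => by
    rw [Algebra.smul_def]; exact I.mul_mem_left _ _ ha
  mul_left := fun b {a} ha => I.mul_mem_left _ _ ha
  mul_right := fun b {a} ha => I.mul_mem_right _ _ ha

lemma isIdlSet_closure {S : Set A} (h : IsIdlSet S) : IsIdlSet (closure S) where
  zero_mem := subset_closure h.zero_mem
  add_mem := fun ha hb =>
    map_mem_closure₂ continuous_add ha hb (fun _ hx _ hy => h.add_mem hx hy)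
  smul_mem := fun c _ ha =>
    map_mem_closure (f := fun x => c • x) (continuous_const_smul c) ha
      (fun _ hx => h.smul_mem c hx)
  mul_left := fun b _ ha =>
    map_mem_closure (f := fun x => b * x) (continuous_mul_left b) ha
      (fun _ hx => h.mul_left b hx)
  mul_right := fun b _ ha =>
    map_mem_closure (f := fun x => x * b) (continuous_mul_right b) ha
      (fun _ hx => h.mul_right b hx)

lemma span_mul_left {G : Set A} (hl : ∀ (b : A), ∀ g ∈ G, b * g ∈ G) (b : A)
    {x : A} (hx : x ∈ Submodule.span ℂ G) : b * x ∈ Submodule.span ℂ G := by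
  induction hx using Submodule.span_induction with
  | mem y hy => exact Submodule.subset_span (hl b y hy)
  | zero => simp
  | add y z _ _ hy hz => rw [mul_add]; exact Submodule.add_mem _ hy hz
  | smul c y _ hy => rw [mul_smul_comm]; exact Submodule.smul_mem _ c hy

lemma span_mul_right {G : Set A} (hr : ∀ (b : A), ∀ g ∈ G, g * b ∈ G) (b : A)
    {x : A} (hx : x ∈ Submodule.span ℂ G) : x * b ∈ Submodule.span ℂ G := by
  induction hx using Submodule.span_induction with
  | mem y hy => exact Submodule.subset_span (hr b y hy)
  | zero => simp
  | add y z _ _ hy hz => rw [add_mul]; exact Submodule.add_mem _ hy hz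
  | smul c y _ hy => rw [smul_mul_assoc]; exact Submodule.smul_mem _ c hy

lemma isIdlSet_closureSpan {G : Set A}
    (hl : ∀ (b : A), ∀ g ∈ G, b * g ∈ G) (hr : ∀ (b : A), ∀ g ∈ G, g * b ∈ G) :
    IsIdlSet (closure (Submodule.span ℂ G : Set A)) where
  zero_mem := subset_closure (Submodule.span ℂ G).zero_mem
  add_mem := fun ha hb =>
    map_mem_closure₂ continuous_add ha hb
      (fun _ hx _ hy => (Submodule.span ℂ G).add_mem hx hy)
  smul_mem := fun c _ ha =>
    map_mem_closure (f := fun x => c • x) (continuous_const_smul c) ha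
      (fun _ hx => (Submodule.span ℂ G).smul_mem c hx)
  mul_left := fun b _ ha =>
    map_mem_closure (f := fun x => b * x) (continuous_mul_left b) ha
      (fun _ hx => span_mul_left hl b hx)
  mul_right := fun b _ ha =>
    map_mem_closure (f := fun x => x * b) (continuous_mul_right b) ha
      (fun _ hx => span_mul_right hr b hx)

lemma isIdlSet_sumSet {S T : Set A} (hS : IsIdlSet S) (hT : IsIdlSet T) :
    IsIdlSet {a : A | ∃ b ∈ S, ∃ c ∈ T, a = b + c} where
  zero_mem := ⟨0, hS.zero_mem, 0, hT.zero_mem, by simp⟩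
  add_mem := fun {a a'} ⟨b, hb, c, hc, h⟩ ⟨b', hb', c', hc', h'⟩ =>
    ⟨b + b', hS.add_mem hb hb', c + c', hT.add_mem hc hc', by rw [h, h']; abel⟩
  smul_mem := fun r {a} ⟨b, hb, c, hc, h⟩ =>
    ⟨r • b, hS.smul_mem r hb, r • c, hT.smul_mem r hc, by rw [h, smul_add]⟩
  mul_left := fun d {a} ⟨b, hb, c, hc, h⟩ =>
    ⟨d * b, hS.mul_left d hb, d * c, hT.mul_left d hc, by rw [h, mul_add]⟩
  mul_right := fun d {a} ⟨b, hb, c, hc, h⟩ =>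
    ⟨b * d, hS.mul_right d hb, c * d, hT.mul_right d hc, by rw [h, add_mul]⟩


lemma inner_mul_left_eq (b : A) (η ζ : X) :
    b * inner (A := A) η ζ = inner (A := A) (rsmul η (star b)) ζ := by
  have h := inner_rsmul_right (A := A) ζ η (star b)
  have := congrArg star h
  rw [star_inner, star_mul, star_star, star_inner] at this
  exact this.symm

lemma corrApply_isIdlSet (S : Set A) : IsIdlSet (corrApply X S) := by
  refine isIdlSet_closureSpan ?_ ?_
  · rintro b g ⟨a, ha, ξ, η, rfl⟩
    exact ⟨a, ha, ξ, rsmul η (star b), inner_mul_left_eq b η (lsmul a ξ)⟩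
  · rintro b g ⟨a, ha, ξ, η, rfl⟩
    refine ⟨a, ha, rsmul ξ b, η, ?_⟩
    rw [← inner_rsmul_right, lsmul_rsmul]

lemma corrApply_mono {S T : Set A} (h : S ⊆ T) : corrApply X S ⊆ corrApply X T := by
  refine closure_mono (Submodule.span_mono ?_)
  rintro g ⟨a, ha, ξ, η, rfl⟩
  exact ⟨a, h ha, ξ, η, rfl⟩

lemma corrIterSum_isIdlSet {S : Set A} (hS : IsIdlSet S) (n : ℕ) :
    IsIdlSet (corrIterSum X S n) := by
  induction n with
  | zero => exact hS
  | succ n ih => exact isIdlSet_sumSet ih (corrApply_isIdlSet _)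

lemma corrIterSum_mono {S : Set A} (hS : IsIdlSet S) {m n : ℕ} (h : m ≤ n) :
    corrIterSum X S m ⊆ corrIterSum X S n := by
  induction h with
  | refl => exact subset_rfl
  | step h ih =>
    refine ih.trans ?_
    intro a ha
    exact ⟨a, ha, 0, (corrApply_isIdlSet _).zero_mem, (add_zero a).symm⟩

lemma corrIterLimit_isIdlSet {S : Set A} (hS : IsIdlSet S) :
    IsIdlSet (corrIterLimit X S) := by
  refine isIdlSet_closure ?_
  constructor
  · exact Set.mem_iUnion.2 ⟨0, hS.zero_mem⟩
  · rintro a b ha hb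
    obtain ⟨m, ha⟩ := Set.mem_iUnion.1 ha
    obtain ⟨n, hb⟩ := Set.mem_iUnion.1 hb
    exact Set.mem_iUnion.2 ⟨max m n, (corrIterSum_isIdlSet hS _).add_mem
      (corrIterSum_mono hS (le_max_left m n) ha)
      (corrIterSum_mono hS (le_max_right m n) hb)⟩
  · rintro c a ha
    obtain ⟨n, ha⟩ := Set.mem_iUnion.1 ha
    exact Set.mem_iUnion.2 ⟨n, (corrIterSum_isIdlSet hS n).smul_mem c ha⟩
  · rintro b a ha
    obtain ⟨n, ha⟩ := Set.mem_iUnion.1 ha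
    exact Set.mem_iUnion.2 ⟨n, (corrIterSum_isIdlSet hS n).mul_left b ha⟩
  · rintro b a ha
    obtain ⟨n, ha⟩ := Set.mem_iUnion.1 ha
    exact Set.mem_iUnion.2 ⟨n, (corrIterSum_isIdlSet hS n).mul_right b ha⟩

/-- `a ↦ ⟨η, φ(a)ξ⟩` as a continuous linear map. -/
def innerLsmulCLM (ξ η : X) : A →L[ℂ] A :=
  LinearMap.mkContinuous
    { toFun := fun a => inner (A := A) η (lsmul a ξ)
      map_add' := fun a b => by
        show inner (A := A) η (lsmul (a + b) ξ) = _
        rw [lsmul_add_left, HilbertModule.inner_add_right]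
      map_smul' := fun c a => by
        show inner (A := A) η (lsmul (c • a) ξ) = _
        simp only [RingHom.id_apply]
        rw [lsmul_csmul_left, inner_csmul_right] }
    (‖η‖ * ‖ξ‖)
    (fun a => by
      calc ‖inner (A := A) η (lsmul a ξ)‖ ≤ ‖η‖ * ‖lsmul a ξ‖ := norm_inner_le _ _
        _ ≤ ‖η‖ * (‖a‖ * ‖ξ‖) :=
            mul_le_mul_of_nonneg_left (norm_lsmul_le a ξ) (norm_nonneg _)
        _ = ‖η‖ * ‖ξ‖ * ‖a‖ := by ring)

lemma corrIterSum_step {S : Set A} (hS : IsIdlSet S) (n : ℕ) :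
    ∀ a ∈ corrIterSum X S n, ∀ ξ η : X,
      inner (A := A) η (lsmul a ξ) ∈ corrIterSum X S (n + 1) := by
  induction n with
  | zero =>
    intro a ha ξ η
    exact ⟨0, hS.zero_mem, inner (A := A) η (lsmul a ξ),
      subset_closure (Submodule.subset_span ⟨a, ha, ξ, η, rfl⟩),
      (zero_add _).symm⟩
  | succ n ih =>
    rintro a ⟨b, hb, c, hc, rfl⟩ ξ η
    refine ⟨inner (A := A) η (lsmul b ξ), ih b hb ξ η,
      inner (A := A) η (lsmul c ξ),
      subset_closure (Submodule.subset_span ⟨c, hc, ξ, η, rfl⟩), ?_⟩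
    rw [lsmul_add_left, HilbertModule.inner_add_right]

/-- `X^∞(I)` is the smallest positively invariant (closed two-sided)
ideal of `A` containing `I`. -/
theorem stmt10 [CompleteSpace X] (I : TwoSidedIdeal A) (hI : IsClosed (I : Set A)) :
    (∃ K : TwoSidedIdeal A, (K : Set A) = corrIterLimit X (I : Set A)) ∧
    IsClosed (corrIterLimit X (I : Set A)) ∧
    (I : Set A) ⊆ corrIterLimit X (I : Set A) ∧
    corrApply X (corrIterLimit X (I : Set A)) ⊆ corrIterLimit X (I : Set A) ∧
    (∀ K : TwoSidedIdeal A, IsClosed (K : Set A) → (I : Set A) ⊆ (K : Set A) →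
      corrApply X (K : Set A) ⊆ (K : Set A) →
      corrIterLimit X (I : Set A) ⊆ (K : Set A)) := by
  have hI' : IsIdlSet (I : Set A) := isIdlSet_coe I
  set L := corrIterLimit X (I : Set A) with hL
  have hLidl : IsIdlSet L := corrIterLimit_isIdlSet hI'
  have hLclosed : IsClosed L := isClosed_closure
  have hsub : (I : Set A) ⊆ L := fun a ha =>
    subset_closure (Set.mem_iUnion.2 ⟨0, ha⟩)
  have hinv : corrApply X L ⊆ L := by
    have hG : {b : A | ∃ a ∈ L, ∃ ξ η : X, b = inner (A := A) η (lsmul a ξ)} ⊆ L := by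
      rintro g ⟨a, ha, ξ, η, rfl⟩
      have heq : inner (A := A) η (lsmul a ξ) = innerLsmulCLM ξ η a := rfl
      rw [heq]
      refine map_mem_closure (innerLsmulCLM (X := X) ξ η).continuous ha ?_
      intro x hx
      obtain ⟨n, hn⟩ := Set.mem_iUnion.1 hx
      exact Set.mem_iUnion.2 ⟨n + 1, corrIterSum_step hI' n x hn ξ η⟩
    have hspan : (Submodule.span ℂ
        {b : A | ∃ a ∈ L, ∃ ξ η : X, b = inner (A := A) η (lsmul a ξ)} : Set A) ⊆ L := by
      intro x hx
      induction hx using Submodule.span_induction with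
      | mem y hy => exact hG hy
      | zero => exact hLidl.zero_mem
      | add y z _ _ hy hz => exact hLidl.add_mem hy hz
      | smul c y _ hy => exact hLidl.smul_mem c hy
    exact closure_minimal hspan hLclosed
  refine ⟨⟨TwoSidedIdeal.mk' L hLidl.zero_mem (fun ha hb => hLidl.add_mem ha hb)
      (fun {x} hx => by
        have := hLidl.smul_mem (-1 : ℂ) hx
        rwa [neg_one_smul] at this)
      (fun {x y} hy => hLidl.mul_left x hy) (fun {x y} hx => hLidl.mul_right y hx),
      TwoSidedIdeal.coe_mk' _ _ _ _ _ _⟩, hLclosed, hsub, hinv, ?_⟩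
  intro K hK hIK hKinv
  have hiter : ∀ n, corrIter X (I : Set A) n ⊆ (K : Set A) := by
    intro n
    induction n with
    | zero => exact hIK
    | succ n ih => exact (corrApply_mono ih).trans hKinv
  have hsum : ∀ n, corrIterSum X (I : Set A) n ⊆ (K : Set A) := by
    intro n
    induction n with
    | zero => exact hIK
    | succ n ih =>
      rintro a ⟨b, hb, c, hc, rfl⟩
      exact K.add_mem (ih hb) (hiter (n + 1) hc)
  exact closure_minimal (Set.iUnion_subset hsum) hK
end
end

section
/- Let X be a C*-correspondence over A. If an ideal I of A is positively invariant (X(I) ⊂ I), then X⁻¹(I) = [·]_I⁻¹(ker φ_{X_I}), J(I) = [·]_I⁻¹(J_{X_I}), and X⁻¹(I) ∩ J(I) = I, where J(I) = {a ∈ A : [φ_X(a)]_I ∈ K(X_I) and a·X⁻¹(I) ⊂ I}. -/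
noncomputable section

open HilbertModule Correspondence

section Helpers
open HilbertModule Correspondence

variable {A : Type*} [CStarAlgebra A] {X : Type*}
  [NormedAddCommGroup X] [NormedSpace ℂ X]

lemma HM.inner_zero_right [HilbertModule A X] (x : X) :
    inner (A := A) x (0 : X) = 0 := by
  have h := inner_add_right (A := A) x 0 0
  rw [add_zero] at h
  exact add_eq_left.mp h.symm

lemma HM.eq_zero_of_inner_self [HilbertModule A X] (x : X)
    (h : inner (A := A) x x = 0) : x = 0 := by
  have hn := norm_sq_inner (A := A) x
  rw [h, norm_zero] at hn
  have : ‖x‖ = 0 := pow_eq_zero_iff (two_ne_zero) |>.mp hn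
  simpa using this

lemma Corr.lsmul_zero [Correspondence A X] (ξ : X) : lsmul (0 : A) ξ = 0 := by
  have h := lsmul_add_left (0 : A) 0 ξ
  rw [add_zero] at h
  exact add_eq_left.mp h.symm

lemma Corr.lact_apply [Correspondence A X] (a : A) (x : X) :
    lact A a x = lsmul a x := rfl

end Helpers

open HilbertModule Correspondence in
/-- for a positively invariant ideal `I`,
`X⁻¹(I) = [·]_I⁻¹(ker φ_{X_I})`, `J(I) = [·]_I⁻¹(J_{X_I})`, and `X⁻¹(I) ∩ J(I) = I`,
where `X_I` is presented as a C*-correspondence `Y` over `B = A/I`. -/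
theorem stmt12 {A B : Type*} [CStarAlgebra A] [CStarAlgebra B]
    {X Y : Type*} [NormedAddCommGroup X] [NormedSpace ℂ X] [Correspondence A X]
    [NormedAddCommGroup Y] [NormedSpace ℂ Y] [Correspondence B Y]
    [CompleteSpace X] [CompleteSpace Y]
    (I : TwoSidedIdeal A) (hI : IsClosed (I : Set A))
    (hpos : corrApply X (I : Set A) ⊆ (I : Set A))
    (D : CorrQuotientData A B I X Y) :
    corrInv X (I : Set A) = ⇑D.π ⁻¹' kerLact Y ∧
    JofI D.toQuotientData = ⇑D.π ⁻¹' JX Y ∧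
    corrInv X (I : Set A) ∩ JofI D.toQuotientData = (I : Set A) := by
  have hq0 : ∀ x : X, D.q x = 0 ↔ inner (A := A) x x ∈ I := by
    intro x
    constructor
    · intro h
      have h2 := D.q_inner x x
      rw [h, HM.inner_zero_right] at h2
      exact (D.π_ker _).mp h2.symm
    · intro h
      apply HM.eq_zero_of_inner_self (A := B)
      rw [D.q_inner]
      exact (D.π_ker _).mpr h
  have h1 : corrInv X (I : Set A) = ⇑D.π ⁻¹' kerLact Y := by
    ext a
    constructor
    · intro ha
      intro ζ
      obtain ⟨ξ, rfl⟩ := D.q_surjective ζ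
      rw [← D.q_lsmul]
      exact (hq0 _).mpr (ha ξ _)
    · intro ha ξ η
      apply (D.π_ker _).mp
      rw [← D.q_inner, D.q_lsmul, ha (D.q ξ), HM.inner_zero_right]
  have h2 : JofI D.toQuotientData = ⇑D.π ⁻¹' JX Y := by
    ext a
    simp only [JofI, JX, Set.mem_preimage, Set.mem_setOf_eq]
    constructor
    · rintro ⟨⟨T, hT, hTq⟩, hb⟩
      constructor
      · have hTa : lact B (X := Y) (D.π a) = T := by
          ext ζ
          obtain ⟨ξ, rfl⟩ := D.q_surjective ζ
          rw [Corr.lact_apply, ← D.q_lsmul, hTq]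
        rwa [hTa]
      · intro d hd
        obtain ⟨b, rfl⟩ := D.π_surjective d
        have hbI : b ∈ corrInv X (I : Set A) := by rw [h1]; exact hd
        rw [← map_mul]
        exact (D.π_ker _).mpr (hb b hbI)
    · rintro ⟨hc, hk⟩
      refine ⟨⟨lact B (D.π a), hc, fun ξ => ?_⟩, fun b hb => ?_⟩
      · rw [Corr.lact_apply, D.q_lsmul]
      · apply (D.π_ker _).mp
        rw [map_mul]
        rw [h1] at hb
        exact hk _ hb
  refine ⟨h1, h2, ?_⟩
  apply Set.Subset.antisymm
  · rintro a ⟨hinv, hJ⟩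
    have hstar : star a ∈ corrInv X (I : Set A) := by
      rw [h1] at hinv ⊢
      intro ζ
      apply HM.eq_zero_of_inner_self (A := B)
      rw [map_star]
      rw [inner_lsmul_left, star_star, hinv _, HM.inner_zero_right]
    have haI : a * star a ∈ I := hJ.2 (star a) hstar
    have hπ0 : D.π a = 0 := by
      have h0 : D.π a * star (D.π a) = 0 := by
        rw [← map_star, ← map_mul]
        exact (D.π_ker _).mpr haI
      have hn := CStarRing.norm_self_mul_star (x := D.π a)
      rw [h0, norm_zero] at hn
      have : ‖D.π a‖ = 0 := by nlinarith [norm_nonneg (D.π a)]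
      simpa using this
    exact (D.π_ker _).mp hπ0
  · intro a ha
    refine ⟨?_, ⟨0, subset_closure (Submodule.zero_mem _), fun ξ => ?_⟩,
      fun b _ => I.mul_mem_right _ _ ha⟩
    · intro ξ η
      exact hpos (subset_closure (Submodule.subset_span ⟨a, ha, ξ, η, rfl⟩))
    · rw [D.q_lsmul, (D.π_ker a).mpr ha, Corr.lsmul_zero]
      simp
end
end
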